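/- arXiv:2410.17568 — 3 statements merged into one kernel-verified Lean document; each statement's English description precedes it below -/
import Mathlib

section
/- For every j ∈ {1,…,r}, the sum of the determinants of all j×j principal submatrices of M equals the partition function of j hard particles on the graph 𝒢_A: ∑_{S ⊆ {1,…,r+1}, |S| = j} det(M_{S,S}) = ∑_{C ⊆ {1,…,2r+1} admissible, |C| = j} ∏_{i∈C} y_i. (Theorem 5.8 together with Lemma 5.5 and Proposition 5.6: the type-A Coxeter–Toda Hamiltonian f_j^{c,c} = tr(∧^j ·) on the conjugation quotient Coxeter double Bruhat cell of SL_{r+1} as a hard-particle partition function.) -/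
open Classical

noncomputable section

/-- `E_i(a) = Id + a·e_{i,i+1}` (with 1-based index `i`), as an `(r+1)×(r+1)` complex matrix. -/
def EupA (r i : ℕ) (a : ℂ) : Matrix (Fin (r + 1)) (Fin (r + 1)) ℂ :=
  Matrix.of fun p q : Fin (r + 1) =>
    (if p = q then (1 : ℂ) else 0) + (if (p : ℕ) + 1 = i ∧ (q : ℕ) = i then a else 0)

/-- `E_{-i}(b) = Id + b·e_{i+1,i}` (with 1-based index `i`). -/
def ElowA (r i : ℕ) (b : ℂ) : Matrix (Fin (r + 1)) (Fin (r + 1)) ℂ :=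
  Matrix.of fun p q : Fin (r + 1) =>
    (if p = q then (1 : ℂ) else 0) + (if (p : ℕ) = i ∧ (q : ℕ) + 1 = i then b else 0)

/-- `D = diag(t_1, t_2/t_1, …, t_r/t_{r-1}, 1/t_r)`, using `t_0 = t_{r+1} = 1`. -/
def DA (r : ℕ) (t : ℕ → ℂ) : Matrix (Fin (r + 1)) (Fin (r + 1)) ℂ :=
  Matrix.diagonal fun p : Fin (r + 1) => t ((p : ℕ) + 1) / t (p : ℕ)

/-- Admissible subsets (hard-particle configurations on the graph `𝒢_A`):
for all `a < b` in `S`, `b - a ≥ 2`, and `b - a ≥ 3` whenever `a` is even. -/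
def AdmissibleA (S : Finset ℕ) : Prop :=
  ∀ a ∈ S, ∀ b ∈ S, a < b → a + 2 ≤ b ∧ (Even a → a + 3 ≤ b)

/-- The sum of the determinants of all `j×j` principal submatrices of `M`. -/
def principalMinorSum {n : ℕ} (M : Matrix (Fin n) (Fin n) ℂ) (j : ℕ) : ℂ :=
  ∑ S ∈ (Finset.univ : Finset (Fin n)).powersetCard j,
    (M.submatrix (fun x : {a : Fin n // a ∈ S} => x.1)
      (fun x : {a : Fin n // a ∈ S} => x.1)).det

/-! `M = L·D·U` is upper Hessenberg, and above the diagonal its column `q + 1` is `c_{q+1}`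
times its column `q`. So in a principal submatrix on rows `s_1 < ⋯ < s_j`, subtracting `c_{s_j}`
times the previous column from the last one when `s_j = s_{j-1} + 1` leaves a last row or last
column that vanishes off the diagonal; by induction the minor is
`∏_{s ∈ S} (t_{s+1}/t_s + [s - 1 ∉ S] c_s t_s/t_{s-1})` (0-based `s`). Expanding the product,
choosing the first summand at `s` puts a particle at site `2s + 1`, choosing the second puts one
at site `2s`, and the resulting configurations are exactly the admissible ones. -/

open Finset

namespace Matrix

variable {R : Type*} [CommRing R] {n : ℕ}

theorem det_succ_of_row_last_eq_zero (N : Matrix (Fin (n + 1)) (Fin (n + 1)) R)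
    (h : ∀ k : Fin n, N (Fin.last n) k.castSucc = 0) :
    N.det = N (Fin.last n) (Fin.last n) * (N.submatrix Fin.castSucc Fin.castSucc).det := by
  rw [det_succ_row N (Fin.last n), Fin.sum_univ_castSucc,
    Finset.sum_eq_zero fun k _ => by rw [h k, mul_zero, zero_mul], zero_add,
    Fin.succAbove_last, ← two_mul, pow_mul, neg_one_sq, one_pow, one_mul]

theorem det_succ_of_col_last_eq_zero (N : Matrix (Fin (n + 1)) (Fin (n + 1)) R)
    (h : ∀ k : Fin n, N k.castSucc (Fin.last n) = 0) :
    N.det = N (Fin.last n) (Fin.last n) * (N.submatrix Fin.castSucc Fin.castSucc).det := by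
  rw [← det_transpose, det_succ_of_row_last_eq_zero _ h, transpose_apply, ← transpose_submatrix,
    det_transpose]

end Matrix

section Hessenberg

variable {R : Type*} [CommRing R] {A : ℕ → ℕ → R} {c : ℕ → R}

def minorFactor (A : ℕ → ℕ → R) (c : ℕ → R) (S : Finset ℕ) (p : ℕ) : R :=
  A p p - if 0 < p ∧ p - 1 ∈ S then c p * A p (p - 1) else 0

theorem minorFactor_image_castSucc {j : ℕ} {f : Fin (j + 1) → ℕ} (hf : StrictMono f)
    (i : Fin j) :
    minorFactor A c (univ.image f) (f i.castSucc) =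
      minorFactor A c (univ.image (f ∘ Fin.castSucc)) (f i.castSucc) := by
  have hlast : f (Fin.last j) ≠ f i.castSucc - 1 := by
    have := hf (Fin.castSucc_lt_last i); omega
  simp [minorFactor, Fin.exists_fin_succ', hlast]

variable (hA : ∀ p q, q + 1 < p → A p q = 0)
  (hcol : ∀ p q, p ≤ q → A p (q + 1) = c (q + 1) * A p q)
include hA hcol

theorem det_of_hessenberg_last {j : ℕ} {f : Fin (j + 1) → ℕ} (hf : StrictMono f) :
    (Matrix.of fun i k => A (f i) (f k)).det =
      minorFactor A c (univ.image f) (f (Fin.last j)) *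
        (Matrix.of fun i k => A (f (Fin.castSucc i)) (f (Fin.castSucc k))).det := by
  have hlt (i : Fin j) : f i.castSucc < f (Fin.last j) := hf (Fin.castSucc_lt_last i)
  by_cases hadj : ∃ k, f k + 1 = f (Fin.last j)
  · obtain ⟨k, hk⟩ := hadj
    have hkl : Fin.last j ≠ k := by rintro rfl; omega
    rw [← Matrix.det_updateCol_add_smul_self _ hkl (-c (f (Fin.last j))),
      Matrix.det_succ_of_col_last_eq_zero]
    · have hmem : 0 < f (Fin.last j) ∧ f (Fin.last j) - 1 ∈ univ.image f :=
        ⟨by omega, mem_image.2 ⟨k, mem_univ _, by omega⟩⟩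
      rw [minorFactor, if_pos hmem, ← hk, Nat.add_sub_cancel]
      congr 1
      · simp [hk, sub_eq_add_neg, mul_comm]
      · congr 1; ext; simp
    · intro i
      have : f i.castSucc ≤ f k := by have := hlt i; omega
      simp [← hk, hcol _ _ this]
  · rw [Matrix.det_succ_of_row_last_eq_zero]
    · have hmem : ¬(0 < f (Fin.last j) ∧ f (Fin.last j) - 1 ∈ univ.image f) := by
        rintro ⟨hpos, hmem⟩
        obtain ⟨k, -, hk⟩ := mem_image.1 hmem
        exact hadj ⟨k, by omega⟩
      rw [minorFactor, if_neg hmem, sub_zero]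
      rfl
    · intro i
      have hne : f i.castSucc + 1 ≠ f (Fin.last j) := fun h => hadj ⟨_, h⟩
      exact hA _ _ (by have := hlt i; omega)

theorem det_of_hessenberg : ∀ {j : ℕ} {f : Fin j → ℕ}, StrictMono f →
    (Matrix.of fun i k => A (f i) (f k)).det = ∏ i, minorFactor A c (univ.image f) (f i)
  | 0, _, _ => by simp
  | j + 1, f, hf => by
    have ih := det_of_hessenberg (hf.comp Fin.strictMono_castSucc)
    simp only [Function.comp_apply] at ih
    rw [det_of_hessenberg_last hA hcol hf, Fin.prod_univ_castSucc, mul_comm, ih]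
    simp [minorFactor_image_castSucc hf]

end Hessenberg

theorem principalMinorSum_of_hessenberg {A : ℕ → ℕ → ℂ} {c : ℕ → ℂ}
    (hA : ∀ p q, q + 1 < p → A p q = 0)
    (hcol : ∀ p q, p ≤ q → A p (q + 1) = c (q + 1) * A p q) (n j : ℕ) :
    principalMinorSum (Matrix.of fun p q : Fin n => A p q) j =
      ∑ S ∈ (range n).powersetCard j, ∏ p ∈ S, minorFactor A c S p := by
  have hrange : (univ : Finset (Fin n)).map Fin.valEmbedding = range n := by ext; simp
  rw [principalMinorSum, ← hrange, powersetCard_map, sum_map]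
  refine sum_congr rfl fun S hS => ?_
  let e := S.orderIsoOfFin (mem_powersetCard_univ.1 hS)
  let f : Fin j → ℕ := fun i => (e i : Fin n)
  have hf : StrictMono f := fun a b hab => e.strictMono hab
  have himage : univ.image f = S.map Fin.valEmbedding := by
    ext m
    simp only [mem_image, mem_univ, true_and, mem_map, Fin.valEmbedding_apply]
    exact ⟨fun ⟨i, hi⟩ => ⟨_, (e i).2, hi⟩,
      fun ⟨p, hp, hpm⟩ => ⟨e.symm ⟨p, hp⟩, by simp [f, hpm]⟩⟩
  rw [← Matrix.det_submatrix_equiv_self e.toEquiv]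
  change (Matrix.of fun i k => A (f i) (f k)).det = _
  rw [det_of_hessenberg hA hcol hf, RelEmbedding.coe_toEmbedding, mapEmbedding_apply, ← himage,
    prod_image hf.injective.injOn]

theorem prod_ElowA_apply (r s : ℕ) (p q : Fin (r + 1)) :
    ((List.range s).map fun m => ElowA r (m + 1) 1).prod p q =
      if (p : ℕ) = q ∨ ((p : ℕ) = q + 1 ∧ (p : ℕ) ≤ s) then 1 else 0 := by
  induction s generalizing q with
  | zero =>
    rw [List.range_zero, List.map_nil, List.prod_nil, Matrix.one_apply]
    exact if_congr (by omega) rfl rfl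
  | succ s ih =>
    rw [List.range_succ, List.map_append, List.prod_append, List.map_singleton,
      List.prod_singleton, Matrix.mul_apply]
    simp only [ih]
    simp only [ElowA, Matrix.of_apply, mul_add, sum_add_distrib, mul_ite, mul_one, mul_zero]
    rw [Fintype.sum_eq_single q fun k hk => if_neg hk,
      Fintype.sum_eq_single p fun k hk => by
        split_ifs <;> first | rfl | (exfalso; omega)]
    split_ifs <;> first | (exfalso; omega) | simp

theorem prod_EupA_apply (r s : ℕ) (c : ℕ → ℂ) (p q : Fin (r + 1)) :
    ((List.range s).map fun m => EupA r (m + 1) (c (m + 1))).prod p q =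
      if (p : ℕ) ≤ q ∧ ((p : ℕ) = q ∨ (q : ℕ) ≤ s) then ∏ m ∈ Ico (p : ℕ) q, c (m + 1)
      else 0 := by
  induction s generalizing q with
  | zero =>
    rw [List.range_zero, List.map_nil, List.prod_nil, Matrix.one_apply]
    by_cases h : p = q
    · simp [h]
    · rw [if_neg h, if_neg (by omega)]
  | succ s ih =>
    rw [List.range_succ, List.map_append, List.prod_append, List.map_singleton,
      List.prod_singleton, Matrix.mul_apply]
    simp only [ih]
    simp only [EupA, Matrix.of_apply, mul_add, sum_add_distrib, mul_ite, mul_one, mul_zero]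
    rw [Fintype.sum_eq_single q fun k hk => if_neg hk, if_pos rfl]
    by_cases hq : (q : ℕ) = s + 1
    · have hs : s < r + 1 := by omega
      rw [Fintype.sum_eq_single ⟨s, hs⟩ fun k hk =>
        if_neg fun h => hk (Fin.ext (by simp; omega))]
      simp only [hq, and_true, le_refl, or_true, if_true]
      by_cases hp : (p : ℕ) ≤ s
      · rw [if_neg (by omega), if_pos hp, if_pos (by omega), prod_Ico_succ_top hp, zero_add]
      · rw [if_neg hp, zero_mul, add_zero]
        exact if_congr (by omega) rfl rfl
    · rw [sum_eq_zero fun k _ => if_neg (by omega), add_zero]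
      exact if_congr (by omega) rfl rfl

def upperEntry (c : ℕ → ℂ) (p q : ℕ) : ℂ :=
  if p ≤ q then ∏ m ∈ Ico p q, c (m + 1) else 0

def coxeterTodaEntry (t c : ℕ → ℂ) : ℕ → ℕ → ℂ
  | 0, q => t 1 / t 0 * upperEntry c 0 q
  | p + 1, q => t (p + 2) / t (p + 1) * upperEntry c (p + 1) q + t (p + 1) / t p * upperEntry c p q

section CoxeterToda

variable {t c : ℕ → ℂ} {p q : ℕ}

theorem upperEntry_self : upperEntry c p p = 1 := by simp [upperEntry]

theorem upperEntry_of_lt (h : q < p) : upperEntry c p q = 0 := if_neg (by omega)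

theorem upperEntry_succ_right (h : p ≤ q) :
    upperEntry c p (q + 1) = c (q + 1) * upperEntry c p q := by
  rw [upperEntry, upperEntry, if_pos h, if_pos (by omega), prod_Ico_succ_top h, mul_comm]

theorem coxeterTodaEntry_of_lt (h : q + 1 < p) : coxeterTodaEntry t c p q = 0 := by
  obtain _ | p := p
  · omega
  · simp [coxeterTodaEntry, upperEntry_of_lt (show q < p by omega),
      upperEntry_of_lt (show q < p + 1 by omega)]

theorem coxeterTodaEntry_succ_right (h : p ≤ q) :
    coxeterTodaEntry t c p (q + 1) = c (q + 1) * coxeterTodaEntry t c p q := by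
  obtain _ | p := p
  · simp [coxeterTodaEntry, upperEntry_succ_right h]; ring
  · simp [coxeterTodaEntry, upperEntry_succ_right h, upperEntry_succ_right (show p ≤ q by omega)]
    ring

theorem minorFactor_coxeterTodaEntry (S : Finset ℕ) :
    minorFactor (coxeterTodaEntry t c) c S p =
      t (p + 1) / t p + if 0 < p ∧ p - 1 ∉ S then c p * (t p / t (p - 1)) else 0 := by
  obtain _ | p := p
  · simp [minorFactor, coxeterTodaEntry, upperEntry_self]
  · have hsucc : upperEntry c p (p + 1) = c (p + 1) := by
      rw [upperEntry_succ_right le_rfl, upperEntry_self, mul_one]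
    by_cases hp : p ∈ S <;>
      simp [minorFactor, coxeterTodaEntry, upperEntry_self, upperEntry_of_lt, hsucc, hp] <;> ring

end CoxeterToda

theorem prod_ElowA_mul_DA_mul_prod_EupA_apply (r : ℕ) (t c : ℕ → ℂ) (p q : Fin (r + 1)) :
    (((List.range r).map fun m => ElowA r (m + 1) 1).prod * DA r t *
        ((List.range r).map fun m => EupA r (m + 1) (c (m + 1))).prod) p q =
      coxeterTodaEntry t c p q := by
  have hU (k : Fin (r + 1)) :
      ((List.range r).map fun m => EupA r (m + 1) (c (m + 1))).prod k q = upperEntry c k q := by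
    rw [prod_EupA_apply, upperEntry]
    exact if_congr (by omega) rfl rfl
  rw [Matrix.mul_apply]
  simp only [DA, Matrix.mul_diagonal, prod_ElowA_apply, hU]
  obtain ⟨_ | p, hp⟩ := p <;> dsimp only
  · rw [Fintype.sum_eq_single ⟨0, hp⟩ fun k hk => by
      have : (k : ℕ) ≠ 0 := fun h => hk (Fin.ext h)
      rw [if_neg (by omega), zero_mul, zero_mul]]
    simp [coxeterTodaEntry]
  · have hp' : p < r + 1 := by omega
    rw [Fintype.sum_eq_add ⟨p + 1, hp⟩ ⟨p, hp'⟩ (by simp) fun k hk => by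
      have : (k : ℕ) ≠ p + 1 ∧ (k : ℕ) ≠ p :=
        ⟨fun h => hk.1 (Fin.ext h), fun h => hk.2 (Fin.ext h)⟩
      rw [if_neg (by omega), zero_mul, zero_mul]]
    simp [coxeterTodaEntry, show p < r by omega]

section HardParticles

def configOf (S E : Finset ℕ) : Finset ℕ :=
  E.image (2 * ·) ∪ (S \ E).image (2 * · + 1)

theorem two_mul_mem_configOf {S E : Finset ℕ} {k : ℕ} : 2 * k ∈ configOf S E ↔ k ∈ E := by
  simp only [configOf, mem_union, mem_image]
  constructor
  · rintro (⟨l, hl, h⟩ | ⟨l, -, h⟩)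
    · rwa [show k = l by omega]
    · omega
  · exact fun hk => Or.inl ⟨k, hk, rfl⟩

theorem two_mul_add_one_mem_configOf {S E : Finset ℕ} {k : ℕ} :
    2 * k + 1 ∈ configOf S E ↔ k ∈ S ∧ k ∉ E := by
  simp only [configOf, mem_union, mem_image, ← mem_sdiff]
  constructor
  · rintro (⟨l, -, h⟩ | ⟨l, hl, h⟩)
    · omega
    · rwa [show k = l by omega]
  · exact fun hk => Or.inr ⟨k, hk, rfl⟩

theorem mem_configOf {S E : Finset ℕ} {m : ℕ} :
    m ∈ configOf S E ↔
      ∃ k, (m = 2 * k ∧ k ∈ E) ∨ (m = 2 * k + 1 ∧ k ∈ S ∧ k ∉ E) := by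
  obtain ⟨k, rfl | rfl⟩ := Nat.even_or_odd' m
  · rw [two_mul_mem_configOf]
    exact ⟨fun h => ⟨k, Or.inl ⟨rfl, h⟩⟩, fun ⟨l, h⟩ => by
      rcases h with ⟨h, hl⟩ | ⟨h, -⟩ <;> [rwa [show k = l by omega]; omega]⟩
  · rw [two_mul_add_one_mem_configOf]
    exact ⟨fun h => ⟨k, Or.inr ⟨rfl, h⟩⟩, fun ⟨l, h⟩ => by
      rcases h with ⟨h, -⟩ | ⟨h, hl⟩ <;> [omega; rwa [show k = l by omega]]⟩

theorem disjoint_image_two_mul_image_two_mul_add_one (A B : Finset ℕ) :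
    Disjoint (A.image (2 * ·)) (B.image (2 * · + 1)) :=
  disjoint_left.2 fun m hm hm' => by
    obtain ⟨k, -, rfl⟩ := mem_image.1 hm
    obtain ⟨l, -, hl⟩ := mem_image.1 hm'
    omega

theorem injective_two_mul : Function.Injective (2 * · : ℕ → ℕ) :=
  mul_right_injective₀ two_ne_zero

theorem injective_two_mul_add_one : Function.Injective (2 * · + 1 : ℕ → ℕ) :=
  (add_left_injective 1).comp injective_two_mul

theorem card_configOf {S E : Finset ℕ} (h : E ⊆ S) : (configOf S E).card = S.card := by
  rw [configOf, card_union_of_disjoint (disjoint_image_two_mul_image_two_mul_add_one _ _),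
    card_image_of_injective _ injective_two_mul,
    card_image_of_injective _ injective_two_mul_add_one,
    card_sdiff_of_subset h, Nat.add_sub_cancel' (card_le_card h)]

theorem prod_configOf {M : Type*} [CommMonoid M] (f : ℕ → M) (S E : Finset ℕ) :
    ∏ i ∈ configOf S E, f i = (∏ p ∈ E, f (2 * p)) * ∏ p ∈ S \ E, f (2 * p + 1) := by
  rw [configOf, prod_union (disjoint_image_two_mul_image_two_mul_add_one _ _),
    prod_image injective_two_mul.injOn, prod_image injective_two_mul_add_one.injOn]

theorem admissibleA_configOf {S E : Finset ℕ} (hES : E ⊆ S)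
    (hE : ∀ p ∈ E, 0 < p ∧ p - 1 ∉ S) : AdmissibleA (configOf S E) := by
  have hgap {k l : ℕ} (hk : k ∈ S) (hl : l ∈ E) : l ≠ k + 1 := by
    rintro rfl
    exact (hE _ hl).2 hk
  intro a ha b hb hab
  obtain ⟨k, rfl | rfl⟩ := Nat.even_or_odd' a <;>
    obtain ⟨l, rfl | rfl⟩ := Nat.even_or_odd' b
  · rw [two_mul_mem_configOf] at ha hb
    have := hgap (hES ha) hb
    omega
  · rw [two_mul_mem_configOf] at ha
    rw [two_mul_add_one_mem_configOf] at hb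
    have : k ≠ l := by rintro rfl; exact hb.2 ha
    omega
  · rw [two_mul_add_one_mem_configOf] at ha
    rw [two_mul_mem_configOf] at hb
    have := hgap ha.1 hb
    exact ⟨by omega, fun h => absurd h (Nat.not_even_two_mul_add_one k)⟩
  · exact ⟨by omega, fun h => absurd h (Nat.not_even_two_mul_add_one k)⟩

variable (n : ℕ)

def supportOf (T : Finset ℕ) : Finset ℕ :=
  (range (n + 1)).filter fun p => 2 * p ∈ T ∨ 2 * p + 1 ∈ T

def evenSupportOf (T : Finset ℕ) : Finset ℕ := (range (n + 1)).filter fun p => 2 * p ∈ T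

theorem configOf_supportOf {T : Finset ℕ} (hT : T ⊆ Icc 1 (2 * n + 1)) (hadm : AdmissibleA T) :
    configOf (supportOf n T) (evenSupportOf n T) = T := by
  ext m
  simp only [mem_configOf, supportOf, evenSupportOf, mem_filter, mem_range]
  constructor
  · rintro ⟨k, ⟨rfl, -, h⟩ | ⟨rfl, ⟨hk, h | h⟩, h'⟩⟩
    exacts [h, absurd ⟨hk, h⟩ h', h]
  · intro hm
    have := mem_Icc.1 (hT hm)
    obtain ⟨k, rfl | rfl⟩ := Nat.even_or_odd' m
    · exact ⟨k, Or.inl ⟨rfl, by omega, hm⟩⟩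
    · refine ⟨k, Or.inr ⟨rfl, ⟨by omega, Or.inr hm⟩, fun h => ?_⟩⟩
      have := hadm _ h.2 _ hm (by omega)
      omega

theorem supportOf_configOf {S E : Finset ℕ} (hS : S ⊆ range (n + 1)) (hES : E ⊆ S) :
    supportOf n (configOf S E) = S := by
  ext p
  simp only [supportOf, mem_filter, two_mul_mem_configOf, two_mul_add_one_mem_configOf]
  have := @hS p
  have := @hES p
  tauto

theorem evenSupportOf_configOf {S E : Finset ℕ} (hS : S ⊆ range (n + 1)) (hES : E ⊆ S) :
    evenSupportOf n (configOf S E) = E := by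
  ext p
  simp only [evenSupportOf, mem_filter, two_mul_mem_configOf]
  have := @hS p
  have := @hES p
  tauto

theorem configOf_mem {j : ℕ} {S E : Finset ℕ} (hS : S ∈ (range (n + 1)).powersetCard j)
    (hES : E ⊆ S) (hE : ∀ p ∈ E, 0 < p ∧ p - 1 ∉ S) :
    configOf S E ∈ ((Icc 1 (2 * n + 1)).powersetCard j).filter AdmissibleA := by
  obtain ⟨hSn, hSj⟩ := mem_powersetCard.1 hS
  refine mem_filter.2 ⟨mem_powersetCard.2 ⟨fun m hm => ?_, hSj ▸ card_configOf hES⟩,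
    admissibleA_configOf hES hE⟩
  obtain ⟨k, ⟨rfl, hk⟩ | ⟨rfl, hk, -⟩⟩ := mem_configOf.1 hm
  · have := (hE k hk).1
    have := mem_range.1 (hSn (hES hk))
    exact mem_Icc.2 ⟨by omega, by omega⟩
  · have := mem_range.1 (hSn hk)
    exact mem_Icc.2 ⟨by omega, by omega⟩

theorem supportOf_mem {j : ℕ} {T : Finset ℕ}
    (hT : T ∈ ((Icc 1 (2 * n + 1)).powersetCard j).filter AdmissibleA) :
    supportOf n T ∈ (range (n + 1)).powersetCard j ∧ evenSupportOf n T ⊆ supportOf n T ∧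
      ∀ p ∈ evenSupportOf n T, 0 < p ∧ p - 1 ∉ supportOf n T := by
  obtain ⟨hT, hadm⟩ := mem_filter.1 hT
  obtain ⟨hTn, hTj⟩ := mem_powersetCard.1 hT
  have hES : evenSupportOf n T ⊆ supportOf n T := fun p hp => by
    simp only [evenSupportOf, supportOf, mem_filter] at hp ⊢
    exact ⟨hp.1, Or.inl hp.2⟩
  refine ⟨mem_powersetCard.2 ⟨filter_subset _ _, ?_⟩, hES, fun p hp => ?_⟩
  · rw [← card_configOf hES, configOf_supportOf n hTn hadm, hTj]
  · simp only [evenSupportOf, supportOf, mem_filter] at hp ⊢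
    have := mem_Icc.1 (hTn hp.2)
    refine ⟨by omega, fun ⟨_, h⟩ => ?_⟩
    rcases h with h | h
    · have := hadm _ h _ hp.2 (by omega)
      have := this.2 (even_two_mul _)
      omega
    · have := hadm _ h _ hp.2 (by omega)
      omega

theorem sum_powersetCard_prod_eq_sum_admissibleA {R : Type*} [CommSemiring R] (y : ℕ → R)
    (j : ℕ) :
    ∑ S ∈ (range (n + 1)).powersetCard j,
        ∏ p ∈ S, (y (2 * p + 1) + if 0 < p ∧ p - 1 ∉ S then y (2 * p) else 0) =
      ∑ T ∈ ((Icc 1 (2 * n + 1)).powersetCard j).filter AdmissibleA, ∏ i ∈ T, y i := by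
  have hexpand (S : Finset ℕ) :
      ∏ p ∈ S, (y (2 * p + 1) + if 0 < p ∧ p - 1 ∉ S then y (2 * p) else 0) =
        ∑ E ∈ S.powerset.filter (fun E => ∀ p ∈ E, 0 < p ∧ p - 1 ∉ S),
          (∏ p ∈ E, y (2 * p)) * ∏ p ∈ S \ E, y (2 * p + 1) := by
    simp_rw [add_comm (y (2 * _ + 1)), prod_add, prod_ite_zero, sum_filter, ite_mul, zero_mul]
  rw [sum_congr rfl fun S _ => hexpand S, sum_sigma']
  refine sum_nbij' (fun x => configOf x.1 x.2) (fun T => ⟨supportOf n T, evenSupportOf n T⟩)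
    ?_ ?_ ?_ ?_ ?_
  · rintro ⟨S, E⟩ hx
    simp only [mem_sigma, mem_filter, mem_powerset] at hx
    exact configOf_mem n hx.1 hx.2.1 hx.2.2
  · intro T hT
    simpa only [mem_coe, mem_sigma, mem_filter, mem_powerset] using supportOf_mem n hT
  · rintro ⟨S, E⟩ hx
    simp only [mem_sigma, mem_filter, mem_powerset, mem_powersetCard] at hx
    simp [supportOf_configOf n hx.1.1 hx.2.1, evenSupportOf_configOf n hx.1.1 hx.2.1]
  · intro T hT
    obtain ⟨hT, hadm⟩ := mem_filter.1 hT
    exact configOf_supportOf n (mem_powersetCard.1 hT).1 hadm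
  · rintro ⟨S, E⟩ -
    exact (prod_configOf y S E).symm

end HardParticles

theorem stmt_0_general (r : ℕ) (t c : ℕ → ℂ)
    (y : ℕ → ℂ)
    (hyodd : ∀ i, 1 ≤ i → i ≤ r + 1 → y (2 * i - 1) = t i / t (i - 1))
    (hyeven : ∀ i, 1 ≤ i → i ≤ r → y (2 * i) = c i * t i / t (i - 1))
    (M : Matrix (Fin (r + 1)) (Fin (r + 1)) ℂ)
    (hM : M = ((List.range r).map fun m => ElowA r (m + 1) 1).prod * DA r t *
        ((List.range r).map fun m => EupA r (m + 1) (c (m + 1))).prod)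
    (j : ℕ) :
    principalMinorSum M j =
      ∑ S ∈ ((Finset.Icc 1 (2 * r + 1)).powersetCard j).filter AdmissibleA,
        ∏ i ∈ S, y i := by
  have hM' : M = Matrix.of fun p q : Fin (r + 1) => coxeterTodaEntry t c p q := by
    ext p q
    rw [hM, prod_ElowA_mul_DA_mul_prod_EupA_apply, Matrix.of_apply]
  rw [hM', principalMinorSum_of_hessenberg (fun _ _ => coxeterTodaEntry_of_lt)
    (fun _ _ => coxeterTodaEntry_succ_right), ← sum_powersetCard_prod_eq_sum_admissibleA r y j]
  refine sum_congr rfl fun S hS => prod_congr rfl fun p hp => ?_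
  have hpr : p < r + 1 := mem_range.1 ((mem_powersetCard.1 hS).1 hp)
  have hodd := hyodd (p + 1) (by omega) (by omega)
  rw [show 2 * (p + 1) - 1 = 2 * p + 1 by omega, Nat.add_sub_cancel] at hodd
  rw [minorFactor_coxeterTodaEntry, hodd]
  congr 1
  split_ifs with h
  · rw [hyeven p h.1 (by omega), mul_div_assoc]
  · rfl

/-- Theorem 5.8 (with Lemma 5.5 and Proposition 5.6): the type-`A` Coxeter–Toda Hamiltonian
`f_j^{c,c} = tr(∧^j ·)` on the conjugation quotient Coxeter double Bruhat cell of `SL_{r+1}`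
as a hard-particle partition function on the graph `𝒢_A`. -/
theorem stmt_0 (r : ℕ) (hr : 1 ≤ r) (t c : ℕ → ℂ)
    (ht0 : t 0 = 1) (htr1 : t (r + 1) = 1)
    (htne : ∀ i, 1 ≤ i → i ≤ r → t i ≠ 0)
    (hcne : ∀ i, 1 ≤ i → i ≤ r → c i ≠ 0)
    (y : ℕ → ℂ)
    (hyodd : ∀ i, 1 ≤ i → i ≤ r + 1 → y (2 * i - 1) = t i / t (i - 1))
    (hyeven : ∀ i, 1 ≤ i → i ≤ r → y (2 * i) = c i * t i / t (i - 1))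
    (M : Matrix (Fin (r + 1)) (Fin (r + 1)) ℂ)
    (hM : M = ((List.range r).map fun m => ElowA r (m + 1) 1).prod * DA r t *
        ((List.range r).map fun m => EupA r (m + 1) (c (m + 1))).prod)
    (j : ℕ) (hj1 : 1 ≤ j) (hj2 : j ≤ r) :
    principalMinorSum M j =
      ∑ S ∈ ((Finset.Icc 1 (2 * r + 1)).powersetCard j).filter AdmissibleA,
        ∏ i ∈ S, y i :=
  stmt_0_general r t c y hyodd hyeven M hM j
end
end

section
/- For every j ∈ {1,…,r} and every k ∈ ℤ, ∑_{C admissible, |C| = j} ∏_{i∈C} y_i(k) = ∑_{C admissible, |C| = j} ∏_{i∈C} y_i(k+1); that is, the hard-particle partition functions C_j are conserved quantities of the normalized A_r^(1) Q-system (Theorem 5.8). -/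
open Classical

noncomputable section

/-!
Let `Z_w(m)` be the generating polynomial, in `X`, of the admissible subsets of `[m, 2r+1]`
weighted by `w`; it satisfies `Z(m) = Z(m+1) + w_m X Z(m+3)` for `m` even and
`Z(m) = Z(m+1) + w_m X Z(m+2)` for `m` odd. Put `u = y(k)` and `v = y(k+1)`, extended by zero
outside `[1, 2r+1]`. The Q-system relation says that `u_{2i+1} + u_{2i+2}` and `v_{2i} + v_{2i+1}`
are the same quantity `R_{i+1}(k+2) R_i(k) / (R_{i+1}(k+1) R_i(k+1))`, and the definition of the
weights gives `u_{2i+1} v_{2i+2} = u_{2i+2} v_{2i+3}`. From these two local relations a downward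
induction shows `Z_u(2i+1) = Z_v(2i+1) + v_{2i} X Z_v(2i+3)`; at `i = 0` this reads
`Z_u(1) = Z_v(1)`, and the partition functions are the coefficients of these polynomials.
-/

section HardParticle

open Finset Polynomial

variable {A : Type*} [CommRing A]

lemma admissibleA_insert_iff {m : ℕ} {T : Finset ℕ} (hT : ∀ b ∈ T, m < b) :
    AdmissibleA (insert m T) ↔
      AdmissibleA T ∧ ∀ b ∈ T, m + (if Even m then 3 else 2) ≤ b := by
  constructor
  · intro h
    refine ⟨fun a ha b hb => h a (mem_insert_of_mem ha) b (mem_insert_of_mem hb),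
      fun b hb => ?_⟩
    have hmb := h m (mem_insert_self m T) b (mem_insert_of_mem hb) (hT b hb)
    split_ifs with hm
    exacts [hmb.2 hm, hmb.1]
  · rintro ⟨hadm, hgap⟩ a ha b hb hab
    rcases mem_insert.1 ha with rfl | ha' <;> rcases mem_insert.1 hb with rfl | hb'
    · omega
    · have := hgap b hb'
      split_ifs at this with he
      · exact ⟨by omega, fun _ => this⟩
      · exact ⟨this, fun h => absurd h he⟩
    · exact absurd (hT a ha') (by omega)
    · exact hadm a ha' b hb' hab

def hardParticlePoly (w : ℕ → A) (N m : ℕ) : A[X] :=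
  ∑ S ∈ (Icc m N).powerset.filter AdmissibleA, C (∏ i ∈ S, w i) * X ^ S.card

variable {w : ℕ → A} {N m : ℕ}

lemma hardParticlePoly_of_lt (h : N < m) : hardParticlePoly w N m = 1 := by
  rw [hardParticlePoly, Icc_eq_empty_of_lt h, powerset_empty, filter_singleton,
    if_pos (by simp [AdmissibleA]), sum_singleton, prod_empty, card_empty, map_one, pow_zero,
    one_mul]

lemma hardParticlePoly_congr {w' : ℕ → A} (h : ∀ i ∈ Icc m N, w i = w' i) :
    hardParticlePoly w N m = hardParticlePoly w' N m :=
  sum_congr rfl fun S hS => by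
    rw [prod_congr rfl fun i hi => h i (mem_powerset.1 (mem_filter.1 hS).1 hi)]

lemma coeff_hardParticlePoly (j : ℕ) :
    (hardParticlePoly w N m).coeff j =
      ∑ S ∈ ((Icc m N).powersetCard j).filter AdmissibleA, ∏ i ∈ S, w i := by
  rw [hardParticlePoly, finsetSum_coeff, powersetCard_eq_filter, filter_comm,
    sum_filter (#· = j)]
  simp only [coeff_C_mul_X_pow, eq_comm]

lemma hardParticlePoly_of_le (h : m ≤ N) :
    hardParticlePoly w N m = hardParticlePoly w N (m + 1) +
      C (w m) * X * hardParticlePoly w N (m + if Even m then 3 else 2) := by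
  have hg : 2 ≤ (if Even m then 3 else 2) := by split_ifs <;> omega
  set f : Finset ℕ → A[X] := fun T =>
    if AdmissibleA T then C (∏ i ∈ T, w i) * X ^ #T else 0
  have hZ (m' : ℕ) : hardParticlePoly w N m' = ∑ T ∈ (Icc m' N).powerset, f T :=
    sum_filter _ _
  have hins : ∑ T ∈ (Icc (m + 1) N).powerset, f (insert m T) =
      C (w m) * X * ∑ T ∈ (Icc (m + if Even m then 3 else 2) N).powerset, f T := by
    rw [mul_sum, ← sum_subset (powerset_mono.2 (Icc_subset_Icc_left
      (by omega : m + 1 ≤ m + if Even m then 3 else 2)))]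
    · refine sum_congr rfl fun T hT => ?_
      have hgap : ∀ b ∈ T, m + (if Even m then 3 else 2) ≤ b := fun b hb =>
        (mem_Icc.1 (mem_powerset.1 hT hb)).1
      have hlt : ∀ b ∈ T, m < b := fun b hb => by have := hgap b hb; omega
      have hmT : m ∉ T := fun hm => (hlt m hm).false
      simp only [f, admissibleA_insert_iff hlt, and_iff_left hgap]
      split_ifs
      · rw [prod_insert hmT, card_insert_of_notMem hmT, map_mul, pow_succ]; ring
      · rw [mul_zero]
    · intro T hT hT'
      have hmT : ∀ b ∈ T, m < b := fun b hb => (mem_Icc.1 (mem_powerset.1 hT hb)).1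
      simp only [f, admissibleA_insert_iff hmT]
      rw [if_neg]
      rintro ⟨-, hgap⟩
      exact hT' (mem_powerset.2 fun b hb =>
        mem_Icc.2 ⟨hgap b hb, (mem_Icc.1 (mem_powerset.1 hT hb)).2⟩)
  rw [hZ, hZ, hZ, ← insert_Icc_add_one_left_eq_Icc h, sum_powerset_insert (by simp), hins]

lemma hardParticlePoly_eq_add (hw : ∀ i, N < i → w i = 0) (m : ℕ) :
    hardParticlePoly w N m = hardParticlePoly w N (m + 1) +
      C (w m) * X * hardParticlePoly w N (m + if Even m then 3 else 2) := by
  rcases le_or_gt m N with h | h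
  · exact hardParticlePoly_of_le h
  · rw [hw m h, hardParticlePoly_of_lt h, hardParticlePoly_of_lt (by omega), map_zero,
      zero_mul, zero_mul, add_zero]

lemma hardParticlePoly_two_mul_add_one (hw : ∀ i, N < i → w i = 0) (i : ℕ) :
    hardParticlePoly w N (2 * i + 1) =
      (1 + C (w (2 * i + 1)) * X) * hardParticlePoly w N (2 * i + 3) +
        C (w (2 * i + 2)) * X * hardParticlePoly w N (2 * i + 5) := by
  have hodd := hardParticlePoly_eq_add hw (2 * i + 1)
  have heven := hardParticlePoly_eq_add hw (2 * i + 2)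
  rw [if_neg (Nat.not_even_iff_odd.2 (odd_two_mul_add_one i))] at hodd
  rw [if_pos (by simp [parity_simps])] at heven
  rw [hodd, heven]
  ring

theorem hardParticlePoly_one_eq_of_transfer {n : ℕ} {u v : ℕ → A}
    (hu : ∀ i, 2 * n + 1 < i → u i = 0) (hv : ∀ i, 2 * n + 1 < i → v i = 0) (hv0 : v 0 = 0)
    (hsum : ∀ i ≤ n, u (2 * i + 1) + u (2 * i + 2) = v (2 * i) + v (2 * i + 1))
    (hprod : ∀ i < n, u (2 * i + 1) * v (2 * i + 2) = u (2 * i + 2) * v (2 * i + 3)) :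
    hardParticlePoly u (2 * n + 1) 1 = hardParticlePoly v (2 * n + 1) 1 := by
  set U := hardParticlePoly u (2 * n + 1)
  set V := hardParticlePoly v (2 * n + 1)
  let P (i : ℕ) : Prop := U (2 * i + 1) = V (2 * i + 1) + C (v (2 * i)) * X * V (2 * i + 3)
  have hlarge (i : ℕ) (hi : n < i) : P i := by
    simp only [P, U, V, hardParticlePoly_of_lt (show 2 * n + 1 < 2 * i + 1 by omega),
      hardParticlePoly_of_lt (show 2 * n + 1 < 2 * i + 3 by omega), hv (2 * i) (by omega),
      map_zero, zero_mul, add_zero]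
  have hstep (i : ℕ) (hi : i ≤ n) (h1 : P (i + 1)) (h2 : P (i + 2)) : P i := by
    have hprod' : u (2 * i + 1) * v (2 * i + 2) = u (2 * i + 2) * v (2 * i + 3) := by
      rcases hi.lt_or_eq with hi | rfl
      · exact hprod i hi
      · rw [hu (2 * i + 2) (by omega), hv (2 * i + 2) (by omega), mul_zero, zero_mul]
    replace h1 : U (2 * i + 3) = V (2 * i + 3) + C (v (2 * i + 2)) * X * V (2 * i + 5) := h1
    replace h2 : U (2 * i + 5) = V (2 * i + 5) + C (v (2 * i + 4)) * X * V (2 * i + 7) := h2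
    have hU := hardParticlePoly_two_mul_add_one hu i
    have hV := hardParticlePoly_two_mul_add_one hv i
    have hV' : V (2 * i + 3) = (1 + C (v (2 * i + 3)) * X) * V (2 * i + 5) +
        C (v (2 * i + 4)) * X * V (2 * i + 7) := hardParticlePoly_two_mul_add_one hv (i + 1)
    have hs := congrArg C (hsum i hi)
    have hp := congrArg C hprod'
    simp only [map_add, map_mul] at hs hp
    linear_combination hU - hV + (1 + C (u (2 * i + 1)) * X) * h1
      + C (u (2 * i + 2)) * X * h2 - C (u (2 * i + 2)) * X * hV'
      + X * V (2 * i + 3) * hs + X ^ 2 * V (2 * i + 5) * hp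
  have hall : ∀ i ≤ n + 1, P i ∧ P (i + 1) := by
    intro i hi
    refine Nat.decreasingInduction (motive := fun i _ => P i ∧ P (i + 1))
      (fun i hi ih => ⟨hstep i (by omega) ih.1 ih.2, ih.1⟩)
      ⟨hlarge _ (by omega), hlarge _ (by omega)⟩ hi
  simpa [P, hv0] using (hall 0 (by omega)).1

end HardParticle

structure QSystemWeights (r : ℕ) (R y : ℕ → ℤ → ℂ) : Prop where
  R_zero : ∀ k, R 0 k = 1
  R_top : ∀ k, R (r + 1) k = 1
  R_ne_zero : ∀ i k, i ≤ r + 1 → R i k ≠ 0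
  recurrence : ∀ i k, 1 ≤ i → i ≤ r →
    R i (k + 1) * R i (k - 1) = (R i k) ^ 2 + R (i - 1) k * R (i + 1) k
  y_odd : ∀ i k, 1 ≤ i → i ≤ r + 1 →
    y (2 * i - 1) k = R i (k + 1) * R (i - 1) k / (R i k * R (i - 1) (k + 1))
  y_even : ∀ i k, 1 ≤ i → i ≤ r →
    y (2 * i) k = R (i - 1) k * R (i + 1) (k + 1) / (R i k * R i (k + 1))

namespace QSystemWeights

variable {r : ℕ} {R y : ℕ → ℤ → ℂ}

lemma y_two_mul_add_one (h : QSystemWeights r R y) {i : ℕ} (hi : i ≤ r) (k : ℤ) :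
    y (2 * i + 1) k = R (i + 1) (k + 1) * R i k / (R (i + 1) k * R i (k + 1)) := by
  simpa [mul_add] using h.y_odd (i + 1) k (by omega) (by omega)

lemma y_two_mul_add_two (h : QSystemWeights r R y) {i : ℕ} (hi : i < r) (k : ℤ) :
    y (2 * i + 2) k = R i k * R (i + 2) (k + 1) / (R (i + 1) k * R (i + 1) (k + 1)) := by
  simpa [mul_add] using h.y_even (i + 1) k (by omega) (by omega)

lemma recurrence_succ (h : QSystemWeights r R y) {i : ℕ} (hi : i < r) (k : ℤ) :
    R (i + 1) (k + 2) * R (i + 1) k = R (i + 1) (k + 1) ^ 2 + R i (k + 1) * R (i + 2) (k + 1) := by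
  simpa [add_assoc] using h.recurrence (i + 1) (k + 1) (by omega) (by omega)

lemma y_odd_add_y_even (h : QSystemWeights r R y) {i : ℕ} (hi : i < r) (k : ℤ) :
    y (2 * i + 1) k + y (2 * i + 2) k =
      R (i + 1) (k + 2) * R i k / (R (i + 1) (k + 1) * R i (k + 1)) := by
  have := h.R_ne_zero i (k + 1) (by omega)
  have := h.R_ne_zero (i + 1) k (by omega)
  have := h.R_ne_zero (i + 1) (k + 1) (by omega)
  rw [h.y_two_mul_add_one hi.le, h.y_two_mul_add_two hi]
  field_simp
  linear_combination (-R i k) * h.recurrence_succ hi k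

lemma y_even_add_y_odd (h : QSystemWeights r R y) {i : ℕ} (hi : i < r) (k : ℤ) :
    y (2 * i + 2) (k + 1) + y (2 * i + 3) (k + 1) =
      R (i + 2) (k + 2) * R (i + 1) k / (R (i + 2) (k + 1) * R (i + 1) (k + 1)) := by
  have := h.R_ne_zero (i + 1) (k + 1) (by omega)
  have := h.R_ne_zero (i + 1) (k + 2) (by omega)
  have := h.R_ne_zero (i + 2) (k + 1) (by omega)
  have e2 := h.y_two_mul_add_two hi (k + 1)
  have e3 := h.y_two_mul_add_one (i := i + 1) hi (k + 1)
  rw [show k + 1 + 1 = k + 2 by ring] at e2 e3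
  rw [show 2 * (i + 1) + 1 = 2 * i + 3 by ring, show i + 1 + 1 = i + 2 by ring] at e3
  rw [e2, e3]
  field_simp
  linear_combination (-R (i + 2) (k + 2)) * h.recurrence_succ hi k

lemma y_odd_mul_y_even (h : QSystemWeights r R y) {i : ℕ} (hi : i < r) (k : ℤ) :
    y (2 * i + 1) k * y (2 * i + 2) (k + 1) = y (2 * i + 2) k * y (2 * i + 3) (k + 1) := by
  have := h.R_ne_zero i (k + 1) (by omega)
  have := h.R_ne_zero (i + 1) k (by omega)
  have := h.R_ne_zero (i + 1) (k + 1) (by omega)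
  have := h.R_ne_zero (i + 1) (k + 2) (by omega)
  have := h.R_ne_zero (i + 2) (k + 1) (by omega)
  have e2 := h.y_two_mul_add_two hi (k + 1)
  have e3 := h.y_two_mul_add_one (i := i + 1) hi (k + 1)
  rw [show k + 1 + 1 = k + 2 by ring] at e2 e3
  rw [show 2 * (i + 1) + 1 = 2 * i + 3 by ring, show i + 1 + 1 = i + 2 by ring] at e3
  rw [h.y_two_mul_add_one hi.le k, h.y_two_mul_add_two hi k, e2, e3]
  field_simp

theorem hardParticlePoly_eq_succ (h : QSystemWeights r R y) (k : ℤ) :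
    hardParticlePoly (y · k) (2 * r + 1) 1 = hardParticlePoly (y · (k + 1)) (2 * r + 1) 1 := by
  set I : Set ℕ := Set.Icc 1 (2 * r + 1)
  have hin {i : ℕ} (h1 : 1 ≤ i) (h2 : i ≤ 2 * r + 1) (t : ℤ) :
      I.indicator (y · t) i = y i t :=
    Set.indicator_of_mem (show i ∈ I from ⟨h1, h2⟩) _
  have hout {i : ℕ} (hi : i = 0 ∨ 2 * r + 1 < i) (t : ℤ) : I.indicator (y · t) i = 0 :=
    Set.indicator_of_notMem (by simp only [I, Set.mem_Icc]; omega) _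
  have hcongr (t : ℤ) : hardParticlePoly (y · t) (2 * r + 1) 1 =
      hardParticlePoly (I.indicator (y · t)) (2 * r + 1) 1 :=
    hardParticlePoly_congr fun i hi =>
      (hin (Finset.mem_Icc.1 hi).1 (Finset.mem_Icc.1 hi).2 t).symm
  rw [hcongr, hcongr]
  refine hardParticlePoly_one_eq_of_transfer (fun i hi => hout (.inr hi) _)
    (fun i hi => hout (.inr hi) _) (hout (.inl rfl) _) (fun i hi => ?_) (fun i hi => ?_)
  · have hlhs : I.indicator (y · k) (2 * i + 1) + I.indicator (y · k) (2 * i + 2) =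
        R (i + 1) (k + 2) * R i k / (R (i + 1) (k + 1) * R i (k + 1)) := by
      rcases hi.lt_or_eq with hi | rfl
      · rw [hin (by omega) (by omega), hin (by omega) (by omega)]
        exact h.y_odd_add_y_even hi k
      · rw [hin (by omega) le_rfl, hout (.inr (by omega)), add_zero, h.y_two_mul_add_one le_rfl,
          h.R_top, h.R_top, h.R_top]
    have hrhs : I.indicator (y · (k + 1)) (2 * i) + I.indicator (y · (k + 1)) (2 * i + 1) =
        R (i + 1) (k + 2) * R i k / (R (i + 1) (k + 1) * R i (k + 1)) := by
      rcases i with _ | i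
      · rw [hout (.inl rfl), hin le_rfl (by omega), zero_add]
        simpa [h.R_zero, add_assoc, one_add_one_eq_two] using
          h.y_two_mul_add_one (Nat.zero_le r) (k + 1)
      · rw [hin (by omega) (by omega), hin (by omega) (by omega)]
        exact h.y_even_add_y_odd (by omega) k
    rw [hlhs, hrhs]
  · rw [hin (by omega) (by omega), hin (by omega) (by omega), hin (by omega) (by omega),
      hin (by omega) (by omega)]
    exact h.y_odd_mul_y_even hi k

end QSystemWeights

theorem stmt_1_general (r : ℕ) (R : ℕ → ℤ → ℂ)
    (hR0 : ∀ k, R 0 k = 1) (hRtop : ∀ k, R (r + 1) k = 1)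
    (hRne : ∀ i k, i ≤ r + 1 → R i k ≠ 0)
    (hrec : ∀ i k, 1 ≤ i → i ≤ r →
      R i (k + 1) * R i (k - 1) = (R i k) ^ 2 + R (i - 1) k * R (i + 1) k)
    (y : ℕ → ℤ → ℂ)
    (hyodd : ∀ i k, 1 ≤ i → i ≤ r + 1 →
      y (2 * i - 1) k = R i (k + 1) * R (i - 1) k / (R i k * R (i - 1) (k + 1)))
    (hyeven : ∀ i k, 1 ≤ i → i ≤ r →
      y (2 * i) k = R (i - 1) k * R (i + 1) (k + 1) / (R i k * R i (k + 1)))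
    (j : ℕ) (k : ℤ) :
    ∑ S ∈ ((Finset.Icc 1 (2 * r + 1)).powersetCard j).filter AdmissibleA,
        ∏ i ∈ S, y i k
      = ∑ S ∈ ((Finset.Icc 1 (2 * r + 1)).powersetCard j).filter AdmissibleA,
          ∏ i ∈ S, y i (k + 1) := by
  have h : QSystemWeights r R y := ⟨hR0, hRtop, hRne, hrec, hyodd, hyeven⟩
  simpa only [coeff_hardParticlePoly] using
    congrArg (Polynomial.coeff · j) (h.hardParticlePoly_eq_succ k)

/-- Theorem 5.8: the hard-particle partition functions `C_j` on `𝒢_A` are conserved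
quantities of the normalized `A_r^(1)` Q-system. -/
theorem stmt_1 (r : ℕ) (hr : 1 ≤ r) (R : ℕ → ℤ → ℂ)
    (hR0 : ∀ k, R 0 k = 1) (hRtop : ∀ k, R (r + 1) k = 1)
    (hRne : ∀ i k, i ≤ r + 1 → R i k ≠ 0)
    (hrec : ∀ i k, 1 ≤ i → i ≤ r →
      R i (k + 1) * R i (k - 1) = (R i k) ^ 2 + R (i - 1) k * R (i + 1) k)
    (y : ℕ → ℤ → ℂ)
    (hyodd : ∀ i k, 1 ≤ i → i ≤ r + 1 →
      y (2 * i - 1) k = R i (k + 1) * R (i - 1) k / (R i k * R (i - 1) (k + 1)))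
    (hyeven : ∀ i k, 1 ≤ i → i ≤ r →
      y (2 * i) k = R (i - 1) k * R (i + 1) (k + 1) / (R i k * R i (k + 1)))
    (j : ℕ) (hj1 : 1 ≤ j) (hj2 : j ≤ r) (k : ℤ) :
    ∑ S ∈ ((Finset.Icc 1 (2 * r + 1)).powersetCard j).filter AdmissibleA,
        ∏ i ∈ S, y i k
      = ∑ S ∈ ((Finset.Icc 1 (2 * r + 1)).powersetCard j).filter AdmissibleA,
          ∏ i ∈ S, y i (k + 1) :=
  stmt_1_general r R hR0 hRtop hRne hrec y hyodd hyeven j k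
end
end

section
/- The trace of the product Ê_{−1}(1)·Ê_{−2}(1)⋯Ê_{−r}(1)·D̂·Ê_1(c_1)·Ê_2(c_2)⋯Ê_r(c_r) of matrices indexed by 𝒞 equals ∑_{J∈𝒞} t_J · ∏_{k∈R_J^+} (1 + c_k). (Equation (5.66): the Coxeter–Toda Hamiltonian of the spin representation of SO_{2r+1}.) -/
set_option maxHeartbeats 1000000


open Classical

noncomputable section

/-- `𝒞`: the collection of `r`-element subsets `I` of `{1,…,r} ∪ {r+2,…,2r+1}` with
`|I ∩ {k, 2r+2-k}| = 1` for every `k ∈ {1,…,r}`. -/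
def CsetB (r : ℕ) : Finset (Finset ℕ) :=
  (Finset.Icc 1 r ∪ Finset.Icc (r + 2) (2 * r + 1)).powerset.filter fun I =>
    I.card = r ∧ ∀ k ∈ Finset.Icc 1 r, (I ∩ {k, 2 * r + 2 - k}).card = 1

/-- `I ∈ I_k^+`. -/
def IkpB (r k : ℕ) (I : Finset ℕ) : Prop :=
  if k = r then r ∈ I else k ∈ I ∧ 2 * r + 1 - k ∈ I

/-- `I ∈ I_k^-`. -/
def IkmB (r k : ℕ) (I : Finset ℕ) : Prop :=
  if k = r then r + 2 ∈ I else k + 1 ∈ I ∧ 2 * r + 2 - k ∈ I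

/-- The bijection `φ_k : I_k^+ → I_k^-`. -/
def phiB (r k : ℕ) (I : Finset ℕ) : Finset ℕ :=
  if k = r then insert (r + 2) (I.erase r)
  else insert (k + 1) (insert (2 * r + 2 - k) ((I.erase k).erase (2 * r + 1 - k)))

/-- `R_I^+ = {k ∈ {1,…,r} : I ∈ I_k^+}`. -/
def RIpB (r : ℕ) (I : Finset ℕ) : Finset ℕ := (Finset.Icc 1 r).filter fun k => IkpB r k I

/-- `R_I^- = {k ∈ {1,…,r} : I ∈ I_k^-}`. -/
def RImB (r : ℕ) (I : Finset ℕ) : Finset ℕ := (Finset.Icc 1 r).filter fun k => IkmB r k I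

/-- `t_I = (∏_{i∈R_I^+} t_i)/(∏_{i∈R_I^-} t_i)`. -/
def tIB (r : ℕ) (t : ℕ → ℂ) (I : Finset ℕ) : ℂ :=
  (∏ i ∈ RIpB r I, t i) / ∏ i ∈ RImB r I, t i

/-- `Ê_k(a) = Id + a·∑_{J∈I_k^+} e_{J,φ_k(J)}`, a matrix indexed by `𝒞`. -/
def EhatUpB (r k : ℕ) (a : ℂ) : Matrix {I // I ∈ CsetB r} {I // I ∈ CsetB r} ℂ :=
  Matrix.of fun P Q : {I // I ∈ CsetB r} =>
    (if P = Q then (1 : ℂ) else 0) +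
      (if IkpB r k P.1 ∧ Q.1 = phiB r k P.1 then a else 0)

/-- `Ê_{-k}(b) = Id + b·∑_{J∈I_k^+} e_{φ_k(J),J}`, a matrix indexed by `𝒞`. -/
def EhatLowB (r k : ℕ) (b : ℂ) : Matrix {I // I ∈ CsetB r} {I // I ∈ CsetB r} ℂ :=
  Matrix.of fun P Q : {I // I ∈ CsetB r} =>
    (if P = Q then (1 : ℂ) else 0) +
      (if IkpB r k Q.1 ∧ P.1 = phiB r k Q.1 then b else 0)

/-- `D̂`, the diagonal matrix with `D̂_{I,I} = t_I`. -/
def DhatB (r : ℕ) (t : ℕ → ℂ) : Matrix {I // I ∈ CsetB r} {I // I ∈ CsetB r} ℂ :=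
  Matrix.diagonal fun P => tIB r t P.1

lemma pair_card_iff (X : Finset ℕ) (a b : ℕ) (hab : a ≠ b) :
    (X ∩ {a, b}).card = 1 ↔ ((a ∈ X) ↔ (b ∉ X)) := by
  by_cases ha : a ∈ X <;> by_cases hb : b ∈ X
  · have : X ∩ {a, b} = {a, b} := by
      ext j; simp only [Finset.mem_inter, Finset.mem_insert, Finset.mem_singleton]
      constructor
      · tauto
      · rintro (rfl | rfl) <;> simp [ha, hb]
    rw [this]; simp only [Finset.card_insert_of_notMem (by simp [hab] : a ∉ ({b}:Finset ℕ)), Finset.card_singleton]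
    constructor
    · intro h; omega
    · tauto
  · have : X ∩ {a, b} = {a} := by
      ext j; simp only [Finset.mem_inter, Finset.mem_insert, Finset.mem_singleton]
      constructor
      · rintro ⟨hj, rfl | rfl⟩ <;> tauto
      · rintro rfl; exact ⟨ha, Or.inl rfl⟩
    rw [this]; simp [ha, hb]
  · have : X ∩ {a, b} = {b} := by
      ext j; simp only [Finset.mem_inter, Finset.mem_insert, Finset.mem_singleton]
      constructor
      · rintro ⟨hj, rfl | rfl⟩ <;> tauto
      · rintro rfl; exact ⟨hb, Or.inr rfl⟩
    rw [this]; simp [ha, hb]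
  · have : X ∩ {a, b} = ∅ := by
      ext j; simp only [Finset.mem_inter, Finset.mem_insert, Finset.mem_singleton]
      constructor
      · rintro ⟨hj, rfl | rfl⟩ <;> tauto
      · simp
    rw [this]; simp [ha, hb]

lemma csetB_iff (r : ℕ) (X : Finset ℕ) :
    X ∈ CsetB r ↔
      (∀ j ∈ X, (1 ≤ j ∧ j ≤ r) ∨ (r + 2 ≤ j ∧ j ≤ 2 * r + 1)) ∧
      (∀ k, 1 ≤ k → k ≤ r → ((2 * r + 2 - k ∈ X) ↔ k ∉ X)) := by
  simp only [CsetB, Finset.mem_filter, Finset.mem_powerset]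
  constructor
  · rintro ⟨hsub, hcard, hpair⟩
    constructor
    · intro j hj
      have := hsub hj
      simp only [Finset.mem_union, Finset.mem_Icc] at this
      tauto
    · intro k hk1 hk2
      have h := hpair k (by simp [Finset.mem_Icc]; omega)
      rw [pair_card_iff X k (2 * r + 2 - k) (by omega)] at h
      tauto
  · rintro ⟨hbd, hpair⟩
    have hsub : X ⊆ Finset.Icc 1 r ∪ Finset.Icc (r + 2) (2 * r + 1) := by
      intro j hj
      have := hbd j hj
      simp only [Finset.mem_union, Finset.mem_Icc]; tauto
    refine ⟨hsub, ?_, ?_⟩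
    · -- card
      have h1 : X.filter (fun j => j ≤ r) = (Finset.Icc 1 r).filter (· ∈ X) := by
        ext j
        simp only [Finset.mem_filter, Finset.mem_Icc]
        constructor
        · rintro ⟨hj, hjr⟩
          have := hbd j hj
          exact ⟨⟨by omega, hjr⟩, hj⟩
        · rintro ⟨⟨_, hjr⟩, hj⟩; exact ⟨hj, hjr⟩
      have h2 : X.filter (fun j => ¬ j ≤ r)
          = ((Finset.Icc 1 r).filter (· ∉ X)).image (fun k => 2 * r + 2 - k) := by
        ext j
        simp only [Finset.mem_filter, Finset.mem_image, Finset.mem_Icc]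
        constructor
        · rintro ⟨hj, hjr⟩
          have hb := hbd j hj
          refine ⟨2 * r + 2 - j, ⟨⟨by omega, by omega⟩, ?_⟩, by omega⟩
          have := hpair (2 * r + 2 - j) (by omega) (by omega)
          have hj' : 2 * r + 2 - (2 * r + 2 - j) = j := by omega
          rw [hj'] at this
          tauto
        · rintro ⟨k, ⟨⟨hk1, hk2⟩, hk3⟩, rfl⟩
          have := (hpair k hk1 hk2).2 hk3
          exact ⟨this, by omega⟩
      have hinj : Set.InjOn (fun k => 2 * r + 2 - k) ((Finset.Icc 1 r).filter (· ∉ X)) := by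
        intro x hx y hy hxy
        simp only [Finset.coe_filter, Set.mem_setOf_eq, Finset.mem_Icc] at hx hy
        simp only at hxy
        omega
      have hc := Finset.card_filter_add_card_filter_not (s := X)
        (p := fun j => j ≤ r)
      rw [h1, h2, Finset.card_image_of_injOn hinj] at hc
      have hc2 := Finset.card_filter_add_card_filter_not (s := Finset.Icc 1 r)
        (p := (· ∈ X))
      have : ((Finset.Icc 1 r).filter (fun j => ¬ j ∈ X)).card
          = ((Finset.Icc 1 r).filter (· ∉ X)).card := rfl
      rw [Nat.card_Icc] at hc2
      omega
    · intro k hk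
      simp only [Finset.mem_Icc] at hk
      rw [pair_card_iff X k (2 * r + 2 - k) (by omega)]
      have := hpair k hk.1 hk.2
      tauto

def psiB (r k : ℕ) (I : Finset ℕ) : Finset ℕ :=
  if k = r then insert r (I.erase (r + 2))
  else insert k (insert (2 * r + 1 - k) ((I.erase (k + 1)).erase (2 * r + 2 - k)))

lemma csetB_pair {r : ℕ} {I : Finset ℕ} (hI : I ∈ CsetB r) {k : ℕ} (h1 : 1 ≤ k) (h2 : k ≤ r) :
    (2 * r + 2 - k ∈ I) ↔ k ∉ I := ((csetB_iff r I).1 hI).2 k h1 h2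

lemma csetB_bounds {r : ℕ} {I : Finset ℕ} (hI : I ∈ CsetB r) {j : ℕ} (hj : j ∈ I) :
    (1 ≤ j ∧ j ≤ r) ∨ (r + 2 ≤ j ∧ j ≤ 2 * r + 1) := ((csetB_iff r I).1 hI).1 j hj

lemma csetB_ext {r : ℕ} {I I' : Finset ℕ} (hI : I ∈ CsetB r) (hI' : I' ∈ CsetB r)
    (h : ∀ j, 1 ≤ j → j ≤ r → (j ∈ I ↔ j ∈ I')) : I = I' := by
  ext j
  by_cases hj : 1 ≤ j ∧ j ≤ r
  · exact h j hj.1 hj.2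
  · constructor
    · intro hjI
      have hb := csetB_bounds hI hjI
      have hhi : r + 2 ≤ j ∧ j ≤ 2 * r + 1 := by omega
      set k := 2 * r + 2 - j with hk
      have hjk : j = 2 * r + 2 - k := by omega
      have h1 : (2 * r + 2 - k ∈ I) ↔ k ∉ I := csetB_pair hI (by omega) (by omega)
      have h2 : (2 * r + 2 - k ∈ I') ↔ k ∉ I' := csetB_pair hI' (by omega) (by omega)
      have h3 := h k (by omega) (by omega)
      rw [← hjk] at h1 h2
      rw [h2, ← h3, ← h1]; exact hjI
    · intro hjI
      have hb := csetB_bounds hI' hjI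
      have hhi : r + 2 ≤ j ∧ j ≤ 2 * r + 1 := by omega
      set k := 2 * r + 2 - j with hk
      have hjk : j = 2 * r + 2 - k := by omega
      have h1 : (2 * r + 2 - k ∈ I) ↔ k ∉ I := csetB_pair hI (by omega) (by omega)
      have h2 : (2 * r + 2 - k ∈ I') ↔ k ∉ I' := csetB_pair hI' (by omega) (by omega)
      have h3 := h k (by omega) (by omega)
      rw [← hjk] at h1 h2
      rw [h1, h3, ← h2]; exact hjI

/-- Facts from `IkpB` for a member of `CsetB`. -/

lemma ikp_facts {r k : ℕ} {I : Finset ℕ} (hI : I ∈ CsetB r) (hk1 : 1 ≤ k) (hk2 : k ≤ r)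
    (h : IkpB r k I) :
    k ∈ I ∧ (k < r → (2 * r + 1 - k ∈ I ∧ k + 1 ∉ I ∧ 2 * r + 2 - k ∉ I)) ∧
      (k = r → r + 2 ∉ I) := by
  by_cases hkr : k = r
  · subst hkr
    simp only [IkpB, if_pos rfl] at h
    refine ⟨h, fun h' => absurd h' (by omega), fun _ => ?_⟩
    have := csetB_pair hI hk1 hk2
    have hr2 : 2 * k + 2 - k = k + 2 := by omega
    rw [hr2] at this
    tauto
  · simp only [IkpB, if_neg hkr] at h
    refine ⟨h.1, fun _ => ⟨h.2, ?_, ?_⟩, by tauto⟩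
    · have := csetB_pair hI (k := k + 1) (by omega) (by omega)
      have e : 2 * r + 2 - (k + 1) = 2 * r + 1 - k := by omega
      rw [e] at this
      tauto
    · have := csetB_pair hI hk1 hk2
      tauto

lemma ikm_facts {r k : ℕ} {I : Finset ℕ} (hI : I ∈ CsetB r) (hk1 : 1 ≤ k) (hk2 : k ≤ r)
    (h : IkmB r k I) :
    (k ∉ I) ∧ (k < r → (k + 1 ∈ I ∧ 2 * r + 2 - k ∈ I ∧ 2 * r + 1 - k ∉ I)) ∧
      (k = r → (r + 2 ∈ I ∧ r ∉ I)) := by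
  by_cases hkr : k = r
  · subst hkr
    simp only [IkmB, if_pos rfl] at h
    have := csetB_pair hI hk1 hk2
    have hr2 : 2 * k + 2 - k = k + 2 := by omega
    rw [hr2] at this
    exact ⟨this.1 h, fun h' => absurd h' (by omega), fun _ => ⟨h, this.1 h⟩⟩
  · simp only [IkmB, if_neg hkr] at h
    have hp := csetB_pair hI hk1 hk2
    have hp1 := csetB_pair hI (k := k + 1) (by omega) (by omega)
    have e : 2 * r + 2 - (k + 1) = 2 * r + 1 - k := by omega
    rw [e] at hp1
    refine ⟨hp.1 h.2, fun _ => ⟨h.1, h.2, ?_⟩, by tauto⟩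
    intro hc
    exact (hp1.1 hc) h.1

lemma phiB_self (r : ℕ) (I : Finset ℕ) : phiB r r I = insert (r + 2) (I.erase r) := if_pos rfl

lemma phiB_of_ne {r k : ℕ} (h : ¬ k = r) (I : Finset ℕ) :
    phiB r k I = insert (k + 1) (insert (2 * r + 2 - k) ((I.erase k).erase (2 * r + 1 - k))) :=
  if_neg h

lemma psiB_self (r : ℕ) (I : Finset ℕ) : psiB r r I = insert r (I.erase (r + 2)) := if_pos rfl

lemma psiB_of_ne {r k : ℕ} (h : ¬ k = r) (I : Finset ℕ) :
    psiB r k I = insert k (insert (2 * r + 1 - k) ((I.erase (k + 1)).erase (2 * r + 2 - k))) :=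
  if_neg h

lemma mem_phi_low {r k j : ℕ} (hk1 : 1 ≤ k) (hk2 : k ≤ r) (hj2 : j ≤ r)
    (I : Finset ℕ) : j ∈ phiB r k I ↔ ((k < r ∧ j = k + 1) ∨ (j ∈ I ∧ j ≠ k)) := by
  by_cases hkr : k = r
  · subst hkr
    rw [phiB_self]; simp only [Finset.mem_insert, Finset.mem_erase]
    constructor
    · rintro (h | ⟨h1, h2⟩)
      · omega
      · exact Or.inr ⟨h2, h1⟩
    · rintro (⟨h, _⟩ | ⟨h1, h2⟩)
      · omega
      · exact Or.inr ⟨h2, h1⟩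
  · have hkr' : k < r := by omega
    rw [phiB_of_ne hkr]; simp only [Finset.mem_insert, Finset.mem_erase]
    constructor
    · rintro (h | h | ⟨hne1, hne2, hmem⟩)
      · exact Or.inl ⟨hkr', h⟩
      · omega
      · exact Or.inr ⟨hmem, hne2⟩
    · rintro (⟨_, h⟩ | ⟨h1, h2⟩)
      · exact Or.inl h
      · exact Or.inr (Or.inr ⟨by omega, h2, h1⟩)

lemma mem_psi_low {r k j : ℕ} (hk1 : 1 ≤ k) (hk2 : k ≤ r) (hj2 : j ≤ r)
    (I : Finset ℕ) : j ∈ psiB r k I ↔ (j = k ∨ (j ∈ I ∧ ¬(k < r ∧ j = k + 1))) := by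
  by_cases hkr : k = r
  · subst hkr
    rw [psiB_self]; simp only [Finset.mem_insert, Finset.mem_erase]
    constructor
    · rintro (h | ⟨h1, h2⟩)
      · exact Or.inl h
      · exact Or.inr ⟨h2, by omega⟩
    · rintro (h | ⟨h1, _⟩)
      · exact Or.inl h
      · exact Or.inr ⟨by omega, h1⟩
  · have hkr' : k < r := by omega
    rw [psiB_of_ne hkr]; simp only [Finset.mem_insert, Finset.mem_erase]
    constructor
    · rintro (h | h | ⟨hne1, hne2, hmem⟩)
      · exact Or.inl h
      · omega
      · exact Or.inr ⟨hmem, by omega⟩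
    · rintro (h | ⟨h1, h2⟩)
      · exact Or.inl h
      · exact Or.inr (Or.inr ⟨by omega, by omega, h1⟩)

lemma mem_phi_of_ne {r k j : ℕ} (I : Finset ℕ) (hk2 : k ≤ r)
    (h1 : j ≠ k) (h2 : j ≠ k + 1) (h3 : j ≠ 2 * r + 1 - k) (h4 : j ≠ 2 * r + 2 - k) :
    j ∈ phiB r k I ↔ j ∈ I := by
  by_cases hkr : k = r
  · subst hkr
    rw [phiB_self]; simp only [Finset.mem_insert, Finset.mem_erase]
    constructor
    · rintro (h | ⟨_, h⟩)
      · omega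
      · exact h
    · intro h; exact Or.inr ⟨h1, h⟩
  · rw [phiB_of_ne hkr]; simp only [Finset.mem_insert, Finset.mem_erase]
    constructor
    · rintro (h | h | ⟨_, _, h⟩)
      · omega
      · omega
      · exact h
    · intro h; exact Or.inr (Or.inr ⟨h3, h1, h⟩)

lemma phi_mem_csetB {r k : ℕ} {I : Finset ℕ} (hI : I ∈ CsetB r) (hk1 : 1 ≤ k) (hk2 : k ≤ r) :
    phiB r k I ∈ CsetB r := by
  rw [csetB_iff]
  obtain ⟨hbd, hpair⟩ := (csetB_iff r I).1 hI
  by_cases hkr : k = r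
  · subst hkr
    constructor
    · intro j hj
      rw [phiB_self] at hj; simp only [Finset.mem_insert, Finset.mem_erase] at hj
      rcases hj with h | ⟨_, h⟩
      · omega
      · exact hbd j h
    · intro m hm1 hm2
      rw [phiB_self]; simp only [Finset.mem_insert, Finset.mem_erase]
      by_cases hmk : m = k
      · subst hmk
        constructor
        · intro _ h
          rcases h with h | ⟨h, _⟩ <;> omega
        · intro _; left; omega
      · have e1 : ¬(2 * k + 2 - m = k + 2) := by omega
        have e2 : 2 * k + 2 - m ≠ k := by omega
        have hpm := hpair m hm1 hm2
        constructor
        · rintro (h | ⟨h1, h2⟩) h'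
          · omega
          · rcases h' with h' | ⟨_, h'⟩
            · omega
            · exact (hpm.1 h2) h'
        · intro h
          right
          refine ⟨e2, ?_⟩
          apply hpm.2
          intro hmI
          exact h (Or.inr ⟨hmk, hmI⟩)
  · have hkr' : k < r := by omega
    constructor
    · intro j hj
      rw [phiB_of_ne hkr] at hj; simp only [Finset.mem_insert, Finset.mem_erase] at hj
      rcases hj with h | h | ⟨_, _, h⟩
      · omega
      · omega
      · exact hbd j h
    · intro m hm1 hm2
      rw [phiB_of_ne hkr]; simp only [Finset.mem_insert, Finset.mem_erase]
      by_cases hmk : m = k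
      · subst hmk
        constructor
        · intro _ h
          rcases h with h | h | ⟨_, h, _⟩ <;> omega
        · intro _; right; left; omega
      · by_cases hmk1 : m = k + 1
        · subst hmk1
          constructor
          · rintro (h | h | ⟨h1, h2, h3⟩) h'
            · omega
            · omega
            · omega
          · intro h
            exact absurd (Or.inl rfl) h
        · have hpm := hpair m hm1 hm2
          constructor
          · rintro (h | h | ⟨h1, h2, h3⟩) h'
            · omega
            · omega
            · rcases h' with h' | h' | ⟨_, _, h'⟩
              · omega
              · omega
              · exact (hpm.1 h3) h'
          · intro h
            right; right
            refine ⟨by omega, by omega, ?_⟩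
            apply hpm.2
            intro hmI
            exact h (Or.inr (Or.inr ⟨by omega, hmk, hmI⟩))

lemma IkpB_self (r : ℕ) (I : Finset ℕ) : IkpB r r I = (r ∈ I) := if_pos rfl

lemma IkpB_of_ne {r k : ℕ} (h : ¬ k = r) (I : Finset ℕ) :
    IkpB r k I = (k ∈ I ∧ 2 * r + 1 - k ∈ I) := if_neg h

lemma IkmB_self (r : ℕ) (I : Finset ℕ) : IkmB r r I = (r + 2 ∈ I) := if_pos rfl

lemma IkmB_of_ne {r k : ℕ} (h : ¬ k = r) (I : Finset ℕ) :
    IkmB r k I = (k + 1 ∈ I ∧ 2 * r + 2 - k ∈ I) := if_neg h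

lemma psi_mem_csetB {r k : ℕ} {I : Finset ℕ} (hI : I ∈ CsetB r) (hk1 : 1 ≤ k) (hk2 : k ≤ r) :
    psiB r k I ∈ CsetB r := by
  rw [csetB_iff]
  obtain ⟨hbd, hpair⟩ := (csetB_iff r I).1 hI
  by_cases hkr : k = r
  · subst hkr
    constructor
    · intro j hj
      rw [psiB_self] at hj; simp only [Finset.mem_insert, Finset.mem_erase] at hj
      rcases hj with h | ⟨_, h⟩
      · omega
      · exact hbd j h
    · intro m hm1 hm2
      rw [psiB_self]; simp only [Finset.mem_insert, Finset.mem_erase]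
      by_cases hmk : m = k
      · subst hmk
        constructor
        · rintro (h | ⟨h, _⟩) _ <;> omega
        · intro h
          exact absurd (Or.inl rfl) h
      · have hpm := hpair m hm1 hm2
        constructor
        · rintro (h | ⟨h1, h2⟩) h'
          · omega
          · rcases h' with h' | ⟨_, h'⟩
            · omega
            · exact (hpm.1 h2) h'
        · intro h
          right
          refine ⟨by omega, ?_⟩
          apply hpm.2
          intro hmI
          exact h (Or.inr ⟨by omega, hmI⟩)
  · have hkr' : k < r := by omega
    constructor
    · intro j hj
      rw [psiB_of_ne hkr] at hj; simp only [Finset.mem_insert, Finset.mem_erase] at hj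
      rcases hj with h | h | ⟨_, _, h⟩
      · omega
      · omega
      · exact hbd j h
    · intro m hm1 hm2
      rw [psiB_of_ne hkr]; simp only [Finset.mem_insert, Finset.mem_erase]
      by_cases hmk : m = k
      · subst hmk
        constructor
        · rintro (h | h | ⟨h1, h2, h3⟩) h' <;> omega
        · intro h
          exact absurd (Or.inl rfl) h
      · by_cases hmk1 : m = k + 1
        · subst hmk1
          constructor
          · intro _ h
            rcases h with h | h | ⟨_, h, _⟩ <;> omega
          · intro _
            right; left; omega
        · have hpm := hpair m hm1 hm2
          constructor
          · rintro (h | h | ⟨h1, h2, h3⟩) h'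
            · omega
            · omega
            · rcases h' with h' | h' | ⟨_, _, h'⟩
              · omega
              · omega
              · exact (hpm.1 h3) h'
          · intro h
            right; right
            refine ⟨by omega, by omega, ?_⟩
            apply hpm.2
            intro hmI
            exact h (Or.inr (Or.inr ⟨by omega, hmk1, hmI⟩))

lemma ikm_phi {r k : ℕ} (I : Finset ℕ) (hk2 : k ≤ r) : IkmB r k (phiB r k I) := by
  by_cases hkr : k = r
  · subst hkr
    rw [IkmB_self, phiB_self]
    exact Finset.mem_insert_self _ _
  · rw [IkmB_of_ne hkr, phiB_of_ne hkr]
    exact ⟨Finset.mem_insert_self _ _,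
      Finset.mem_insert_of_mem (Finset.mem_insert_self _ _)⟩

lemma ikp_psi {r k : ℕ} (I : Finset ℕ) (hk2 : k ≤ r) : IkpB r k (psiB r k I) := by
  by_cases hkr : k = r
  · subst hkr
    rw [IkpB_self, psiB_self]
    exact Finset.mem_insert_self _ _
  · rw [IkpB_of_ne hkr, psiB_of_ne hkr]
    exact ⟨Finset.mem_insert_self _ _,
      Finset.mem_insert_of_mem (Finset.mem_insert_self _ _)⟩

lemma psi_phi {r k : ℕ} {I : Finset ℕ} (hI : I ∈ CsetB r) (hk1 : 1 ≤ k) (hk2 : k ≤ r)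
    (h : IkpB r k I) : psiB r k (phiB r k I) = I := by
  have hf := ikp_facts hI hk1 hk2 h
  apply csetB_ext (psi_mem_csetB (phi_mem_csetB hI hk1 hk2) hk1 hk2) hI
  intro j hj1 hj2
  rw [mem_psi_low hk1 hk2 hj2, mem_phi_low hk1 hk2 hj2]
  constructor
  · rintro (rfl | ⟨(⟨h1, h2⟩ | ⟨h1, h2⟩), h3⟩)
    · exact hf.1
    · exact absurd ⟨h1, h2⟩ h3
    · exact h1
  · intro hj
    by_cases hjk : j = k
    · exact Or.inl hjk
    · right
      refine ⟨Or.inr ⟨hj, hjk⟩, ?_⟩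
      rintro ⟨hlt, rfl⟩
      exact (hf.2.1 hlt).2.1 hj

lemma phi_psi {r k : ℕ} {I : Finset ℕ} (hI : I ∈ CsetB r) (hk1 : 1 ≤ k) (hk2 : k ≤ r)
    (h : IkmB r k I) : phiB r k (psiB r k I) = I := by
  have hf := ikm_facts hI hk1 hk2 h
  apply csetB_ext (phi_mem_csetB (psi_mem_csetB hI hk1 hk2) hk1 hk2) hI
  intro j hj1 hj2
  rw [mem_phi_low hk1 hk2 hj2, mem_psi_low hk1 hk2 hj2]
  constructor
  · rintro (⟨hlt, rfl⟩ | ⟨(rfl | ⟨hj, _⟩), hne⟩)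
    · exact (hf.2.1 hlt).1
    · exact absurd rfl hne
    · exact hj
  · intro hj
    by_cases hc : k < r ∧ j = k + 1
    · exact Or.inl hc
    · right
      refine ⟨Or.inr ⟨hj, hc⟩, ?_⟩
      rintro rfl
      exact hf.1 hj

lemma ikp_phi_of_gt {r k k' : ℕ} (I : Finset ℕ) (hk1 : 1 ≤ k) (hk'r : k' ≤ r)
    (hgt : k + 2 ≤ k') : IkpB r k' (phiB r k I) ↔ IkpB r k' I := by
  have h1 : (k' ∈ phiB r k I ↔ k' ∈ I) :=
    mem_phi_of_ne I (by omega) (by omega) (by omega) (by omega) (by omega)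
  by_cases h : k' = r
  · subst h
    rw [IkpB_self, IkpB_self]
    exact h1
  · have h2 : (2 * r + 1 - k' ∈ phiB r k I ↔ 2 * r + 1 - k' ∈ I) :=
      mem_phi_of_ne I (by omega) (by omega) (by omega) (by omega) (by omega)
    rw [IkpB_of_ne h, IkpB_of_ne h]
    rw [h1, h2]

def upathB (r : ℕ) : ℕ → ℕ → Finset ℕ → Finset ℕ → Finset ℕ → Prop
  | 0, _, S, P, Q => S = ∅ ∧ P = Q
  | n + 1, a, S, P, Q =>
      (a + 1 ∉ S ∧ upathB r n (a + 1) S P Q) ∨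
      (a + 1 ∈ S ∧ IkpB r (a + 1) P ∧ upathB r n (a + 1) (S.erase (a + 1)) (phiB r (a + 1) P) Q)

def lpathB (r : ℕ) : ℕ → ℕ → Finset ℕ → Finset ℕ → Finset ℕ → Prop
  | 0, _, T, P, Q => T = ∅ ∧ P = Q
  | n + 1, a, T, P, Q =>
      (a + 1 ∉ T ∧ lpathB r n (a + 1) T P Q) ∨
      (a + 1 ∈ T ∧ IkmB r (a + 1) P ∧ lpathB r n (a + 1) (T.erase (a + 1)) (psiB r (a + 1) P) Q)

lemma upath_subset {r : ℕ} : ∀ {n a : ℕ} {S P Q : Finset ℕ},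
    upathB r n a S P Q → S ⊆ Finset.Icc (a + 1) (a + n)
  | 0, a, S, P, Q, h => by
    rw [h.1]; exact Finset.empty_subset _
  | n + 1, a, S, P, Q, h => by
    rcases h with ⟨hna, h'⟩ | ⟨ha, _, h'⟩
    · intro x hx
      have := upath_subset h' hx
      simp only [Finset.mem_Icc] at this ⊢
      omega
    · intro x hx
      by_cases hxa : x = a + 1
      · simp only [Finset.mem_Icc]; omega
      · have := upath_subset h' (Finset.mem_erase.2 ⟨hxa, hx⟩)
        simp only [Finset.mem_Icc] at this ⊢
        omega

lemma lpath_subset {r : ℕ} : ∀ {n a : ℕ} {T P Q : Finset ℕ},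
    lpathB r n a T P Q → T ⊆ Finset.Icc (a + 1) (a + n)
  | 0, a, T, P, Q, h => by
    rw [h.1]; exact Finset.empty_subset _
  | n + 1, a, T, P, Q, h => by
    rcases h with ⟨hna, h'⟩ | ⟨ha, _, h'⟩
    · intro x hx
      have := lpath_subset h' hx
      simp only [Finset.mem_Icc] at this ⊢
      omega
    · intro x hx
      by_cases hxa : x = a + 1
      · simp only [Finset.mem_Icc]; omega
      · have := lpath_subset h' (Finset.mem_erase.2 ⟨hxa, hx⟩)
        simp only [Finset.mem_Icc] at this ⊢
        omega

lemma upath_flip {r : ℕ} : ∀ {n a : ℕ} {S P Q : Finset ℕ},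
    upathB r n a S P Q → P ∈ CsetB r → a + n ≤ r → ∀ j, 1 ≤ j → j ≤ r →
      (((j ∈ Q) ↔ (j ∈ P)) ↔ ((j ∈ S) ↔ (j - 1 ∈ S)))
  | 0, a, S, P, Q, h, hP, har, j, hj1, hj2 => by
    rw [h.1, h.2]
    simp
  | n + 1, a, S, P, Q, h, hP, har, j, hj1, hj2 => by
    have hsub : S ⊆ Finset.Icc (a + 1) (a + (n + 1)) := upath_subset h
    rcases h with ⟨hna, h'⟩ | ⟨ha, hkp, h'⟩
    · exact upath_flip h' hP (by omega) j hj1 hj2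
    · have hk2 : a + 1 ≤ r := by omega
      have hfacts := ikp_facts hP (by omega) hk2 hkp
      have hP1 : phiB r (a + 1) P ∈ CsetB r := phi_mem_csetB hP (by omega) hk2
      have hS' : ∀ x, x ∈ S.erase (a + 1) ↔ (x ∈ S ∧ x ≠ a + 1) := by
        intro x
        rw [Finset.mem_erase]; tauto
      have haS : a ∉ S := fun hc => by
        have := hsub hc; simp only [Finset.mem_Icc] at this; omega
      have IH := upath_flip h' hP1 (by omega)
      by_cases hja : j = a + 1
      · subst hja
        have e1 : (a + 1) ∈ phiB r (a + 1) P ↔ False := by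
          rw [mem_phi_low (by omega) hk2 hj2]
          simp only [iff_false]
          rintro (⟨_, h1⟩ | ⟨_, h2⟩) <;> omega
        have IH' := IH (a + 1) hj1 hj2
        rw [e1] at IH'
        have e2 : (a + 1) ∈ S.erase (a + 1) ↔ False := by simp
        have e3 : (a + 1 - 1) ∈ S.erase (a + 1) ↔ False := by
          simp only [iff_false]
          intro hc
          rw [hS'] at hc
          exact haS (by simpa using hc.1)
        rw [e2, e3] at IH'
        have hap : (a + 1) ∈ P := hfacts.1
        have hq : (a + 1) ∉ Q := by tauto
        have ham : (a + 1 - 1) = a := by omega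
        rw [ham]
        tauto
      · by_cases hja2 : j = a + 2
        · subst hja2
          have hlt : a + 1 < r := by omega
          have e1 : (a + 2) ∈ phiB r (a + 1) P ↔ True := by
            rw [mem_phi_low (by omega) hk2 hj2]
            exact iff_of_true (Or.inl ⟨hlt, rfl⟩) trivial
          have IH' := IH (a + 2) (by omega) hj2
          rw [e1] at IH'
          have e2 : (a + 2) ∈ S.erase (a + 1) ↔ (a + 2) ∈ S := by
            rw [hS']; constructor
            · tauto
            · intro hx; exact ⟨hx, by omega⟩
          have e3 : (a + 2 - 1) ∈ S.erase (a + 1) ↔ False := by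
            simp only [iff_false]
            intro hc
            rw [hS'] at hc
            have : a + 2 - 1 = a + 1 := by omega
            rw [this] at hc
            exact hc.2 rfl
          rw [e2, e3] at IH'
          have hap : (a + 2) ∉ P := (hfacts.2.1 hlt).2.1
          have ham : (a + 2 - 1) = a + 1 := by omega
          rw [ham]
          tauto
        · have e1 : j ∈ phiB r (a + 1) P ↔ j ∈ P := by
            rw [mem_phi_low (by omega) hk2 hj2]
            constructor
            · rintro (⟨_, h1⟩ | ⟨h1, _⟩)
              · omega
              · exact h1
            · intro hj; exact Or.inr ⟨hj, hja⟩
          have IH' := IH j hj1 hj2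
          rw [e1] at IH'
          have e2 : j ∈ S.erase (a + 1) ↔ j ∈ S := by
            rw [hS']; constructor
            · tauto
            · intro hx; exact ⟨hx, hja⟩
          have e3 : (j - 1) ∈ S.erase (a + 1) ↔ (j - 1) ∈ S := by
            rw [hS']; constructor
            · tauto
            · intro hx; exact ⟨hx, by omega⟩
          rw [e2, e3] at IH'
          exact IH'

lemma lpath_flip {r : ℕ} : ∀ {n a : ℕ} {T P Q : Finset ℕ},
    lpathB r n a T P Q → P ∈ CsetB r → a + n ≤ r → ∀ j, 1 ≤ j → j ≤ r →
      (((j ∈ P) ↔ (j ∈ Q)) ↔ ((j ∈ T) ↔ (j - 1 ∈ T)))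
  | 0, a, T, P, Q, h, hP, har, j, hj1, hj2 => by
    rw [h.1, h.2]
    simp
  | n + 1, a, T, P, Q, h, hP, har, j, hj1, hj2 => by
    have hsub : T ⊆ Finset.Icc (a + 1) (a + (n + 1)) := lpath_subset h
    rcases h with ⟨hna, h'⟩ | ⟨ha, hkm, h'⟩
    · exact lpath_flip h' hP (by omega) j hj1 hj2
    · have hk2 : a + 1 ≤ r := by omega
      have hfacts := ikm_facts hP (by omega) hk2 hkm
      have hP0 : psiB r (a + 1) P ∈ CsetB r := psi_mem_csetB hP (by omega) hk2
      have hT' : ∀ x, x ∈ T.erase (a + 1) ↔ (x ∈ T ∧ x ≠ a + 1) := by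
        intro x
        rw [Finset.mem_erase]; tauto
      have haT : a ∉ T := fun hc => by
        have := hsub hc; simp only [Finset.mem_Icc] at this; omega
      have IH := lpath_flip h' hP0 (by omega)
      by_cases hja : j = a + 1
      · subst hja
        have e1 : (a + 1) ∈ psiB r (a + 1) P ↔ True := by
          rw [mem_psi_low (by omega) hk2 hj2]
          exact iff_of_true (Or.inl rfl) trivial
        have IH' := IH (a + 1) hj1 hj2
        rw [e1] at IH'
        have e2 : (a + 1) ∈ T.erase (a + 1) ↔ False := by simp
        have e3 : (a + 1 - 1) ∈ T.erase (a + 1) ↔ False := by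
          simp only [iff_false]
          intro hc
          rw [hT'] at hc
          exact haT (by simpa using hc.1)
        rw [e2, e3] at IH'
        have hap : (a + 1) ∉ P := hfacts.1
        have ham : (a + 1 - 1) = a := by omega
        rw [ham]
        tauto
      · by_cases hja2 : j = a + 2
        · subst hja2
          have hlt : a + 1 < r := by omega
          have e1 : (a + 2) ∈ psiB r (a + 1) P ↔ False := by
            rw [mem_psi_low (by omega) hk2 hj2]
            simp only [iff_false]
            rintro (h1 | ⟨h1, h2⟩)
            · omega
            · exact h2 ⟨hlt, by trivial⟩
          have IH' := IH (a + 2) (by omega) hj2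
          rw [e1] at IH'
          have e2 : (a + 2) ∈ T.erase (a + 1) ↔ (a + 2) ∈ T := by
            rw [hT']; constructor
            · tauto
            · intro hx; exact ⟨hx, by omega⟩
          have e3 : (a + 2 - 1) ∈ T.erase (a + 1) ↔ False := by
            simp only [iff_false]
            intro hc
            rw [hT'] at hc
            have : a + 2 - 1 = a + 1 := by omega
            rw [this] at hc
            exact hc.2 rfl
          rw [e2, e3] at IH'
          have hap : (a + 2) ∈ P := (hfacts.2.1 hlt).1
          have ham : (a + 2 - 1) = a + 1 := by omega
          rw [ham]
          tauto
        · have e1 : j ∈ psiB r (a + 1) P ↔ j ∈ P := by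
            rw [mem_psi_low (by omega) hk2 hj2]
            constructor
            · rintro (h1 | ⟨h1, _⟩)
              · omega
              · exact h1
            · intro hj
              right
              refine ⟨hj, ?_⟩
              rintro ⟨_, h2⟩
              omega
          have IH' := IH j hj1 hj2
          rw [e1] at IH'
          have e2 : j ∈ T.erase (a + 1) ↔ j ∈ T := by
            rw [hT']; constructor
            · tauto
            · intro hx; exact ⟨hx, hja⟩
          have e3 : (j - 1) ∈ T.erase (a + 1) ↔ (j - 1) ∈ T := by
            rw [hT']; constructor
            · tauto
            · intro hx; exact ⟨hx, by omega⟩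
          rw [e2, e3] at IH'
          exact IH'

lemma lpath_mem {r : ℕ} : ∀ {n a : ℕ} {T P Q : Finset ℕ},
    lpathB r n a T P Q → P ∈ CsetB r → a + n ≤ r → ∀ k ∈ T, k ∈ Q
  | 0, a, T, P, Q, h, _, _, k, hk => by
    rw [h.1] at hk; exact absurd hk (Finset.notMem_empty k)
  | n + 1, a, T, P, Q, h, hP, har, k, hk => by
    rcases h with ⟨hna, h'⟩ | ⟨ha, hkm, h'⟩
    · exact lpath_mem h' hP (by omega) k hk
    · have hk2 : a + 1 ≤ r := by omega
      have hP0 : psiB r (a + 1) P ∈ CsetB r := psi_mem_csetB hP (by omega) hk2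
      by_cases hka : k = a + 1
      · subst hka
        have hsub := lpath_subset h'
        have hflip := lpath_flip h' hP0 (by omega) (a + 1) (by omega) hk2
        have h1 : (a + 1) ∈ psiB r (a + 1) P := by
          rw [mem_psi_low (by omega) hk2 hk2]
          exact Or.inl rfl
        have h2 : (a + 1) ∉ T.erase (a + 1) := by simp
        have h3 : (a + 1 - 1) ∉ T.erase (a + 1) := by
          intro hc
          have := hsub hc
          simp only [Finset.mem_Icc] at this
          omega
        tauto
      · exact lpath_mem h' hP0 (by omega) k (Finset.mem_erase.2 ⟨hka, hk⟩)

lemma upath_valid {r : ℕ} : ∀ {n a : ℕ} {S P Q : Finset ℕ},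
    upathB r n a S P Q → P ∈ CsetB r → a + n ≤ r → ∀ k ∈ S,
      ((k - 1 ∈ S → k ∉ P) ∧ (k - 1 ∉ S → k ∈ P) ∧ (k < r → k + 1 ∉ P))
  | 0, a, S, P, Q, h, _, _, k, hk => by
    rw [h.1] at hk; exact absurd hk (Finset.notMem_empty k)
  | n + 1, a, S, P, Q, h, hP, har, k, hk => by
    have hsub : S ⊆ Finset.Icc (a + 1) (a + (n + 1)) := upath_subset h
    rcases h with ⟨hna, h'⟩ | ⟨ha, hkp, h'⟩
    · exact upath_valid h' hP (by omega) k hk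
    · have hk2 : a + 1 ≤ r := by omega
      have hfacts := ikp_facts hP (by omega) hk2 hkp
      have hP1 : phiB r (a + 1) P ∈ CsetB r := phi_mem_csetB hP (by omega) hk2
      have hkr : k ≤ r := by
        have := hsub hk; simp only [Finset.mem_Icc] at this; omega
      by_cases hka : k = a + 1
      · subst hka
        refine ⟨?_, fun _ => hfacts.1, fun hlt => (hfacts.2.1 hlt).2.1⟩
        intro hc
        have := hsub hc
        simp only [Finset.mem_Icc] at this
        omega
      · have hk' : k ∈ S.erase (a + 1) := Finset.mem_erase.2 ⟨hka, hk⟩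
        have hka' : a + 2 ≤ k := by
          have := hsub hk; simp only [Finset.mem_Icc] at this; omega
        have IH := upath_valid h' hP1 (by omega) k hk'
        by_cases hka2 : k = a + 2
        · subst hka2
          have hlt : a + 1 < r := by omega
          refine ⟨fun _ => (hfacts.2.1 hlt).2.1, fun hc => absurd ?_ hc, fun hlt2 => ?_⟩
          · have : a + 2 - 1 = a + 1 := by omega
            rw [this]; exact ha
          · have h3 := IH.2.2 hlt2
            intro hc
            apply h3
            rw [mem_phi_low (by omega) hk2 (by omega)]
            exact Or.inr ⟨hc, by omega⟩
        · have hka3 : a + 3 ≤ k := by omega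
          have em : k ∈ phiB r (a + 1) P ↔ k ∈ P :=
            mem_phi_of_ne P hk2 (by omega) (by omega) (by omega) (by omega)
          have eS : k - 1 ∈ S.erase (a + 1) ↔ k - 1 ∈ S := by
            rw [Finset.mem_erase]
            constructor
            · tauto
            · intro hx; exact ⟨by omega, hx⟩
          refine ⟨fun hc => ?_, fun hc => ?_, fun hlt => ?_⟩
          · have := IH.1 (eS.2 hc)
            rw [em] at this
            exact this
          · have := IH.2.1 (fun hx => hc (eS.1 hx))
            rw [em] at this
            exact this
          · have := IH.2.2 hlt
            have em1 : k + 1 ∈ phiB r (a + 1) P ↔ k + 1 ∈ P :=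
              mem_phi_of_ne P hk2 (by omega) (by omega) (by omega) (by omega)
            rw [em1] at this
            exact this

lemma upath_exists {r : ℕ} : ∀ {n a : ℕ} {P : Finset ℕ}, P ∈ CsetB r → a + n ≤ r →
    ∀ {S : Finset ℕ}, S ⊆ Finset.Icc (a + 1) (a + n) → (∀ k ∈ S, IkpB r k P) →
      (∀ k, ¬(k ∈ S ∧ k + 1 ∈ S)) → ∃ Q, Q ∈ CsetB r ∧ upathB r n a S P Q
  | 0, a, P, hP, har, S, hsub, _, _ => by
    have : S = ∅ := by
      rw [← Finset.subset_empty]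
      intro x hx
      have := hsub hx
      simp only [Finset.mem_Icc] at this
      exact absurd this (by omega)
    exact ⟨P, hP, this, rfl⟩
  | n + 1, a, P, hP, har, S, hsub, hval, hadj => by
    by_cases ha : a + 1 ∈ S
    · have hk2 : a + 1 ≤ r := by omega
      have hkp : IkpB r (a + 1) P := hval (a + 1) ha
      have hP1 : phiB r (a + 1) P ∈ CsetB r := phi_mem_csetB hP (by omega) hk2
      have ha2 : a + 2 ∉ S := fun hc => hadj (a + 1) ⟨ha, hc⟩
      have hsub' : S.erase (a + 1) ⊆ Finset.Icc (a + 2) (a + 1 + n) := by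
        intro x hx
        rw [Finset.mem_erase] at hx
        have := hsub hx.2
        simp only [Finset.mem_Icc] at this ⊢
        omega
      have hval' : ∀ k ∈ S.erase (a + 1), IkpB r k (phiB r (a + 1) P) := by
        intro k hk
        rw [Finset.mem_erase] at hk
        have hk3 : a + 3 ≤ k := by
          have := hsub hk.2
          simp only [Finset.mem_Icc] at this
          rcases Nat.lt_or_ge k (a + 3) with h | h
          · exfalso
            have : k = a + 2 := by omega
            exact ha2 (this ▸ hk.2)
          · exact h
        have hkr : k ≤ r := by
          have := hsub hk.2; simp only [Finset.mem_Icc] at this; omega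
        exact (ikp_phi_of_gt P (by omega) hkr hk3).2 (hval k hk.2)
      have hadj' : ∀ k, ¬(k ∈ S.erase (a + 1) ∧ k + 1 ∈ S.erase (a + 1)) := by
        intro k hc
        exact hadj k ⟨(Finset.mem_erase.1 hc.1).2, (Finset.mem_erase.1 hc.2).2⟩
      obtain ⟨Q, hQ, hup⟩ := upath_exists hP1 (by omega : (a + 1) + n ≤ r) hsub' hval' hadj'
      exact ⟨Q, hQ, Or.inr ⟨ha, hkp, hup⟩⟩
    · have hsub' : S ⊆ Finset.Icc (a + 2) (a + 1 + n) := by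
        intro x hx
        have := hsub hx
        simp only [Finset.mem_Icc] at this ⊢
        refine ⟨?_, by omega⟩
        rcases Nat.lt_or_ge x (a + 2) with h | h
        · exfalso
          have : x = a + 1 := by omega
          exact ha (this ▸ hx)
        · exact h
      obtain ⟨Q, hQ, hup⟩ := upath_exists hP (by omega : (a + 1) + n ≤ r) hsub' hval hadj
      exact ⟨Q, hQ, Or.inl ⟨ha, hup⟩⟩

lemma lpath_exists {r : ℕ} : ∀ {n a : ℕ} {P : Finset ℕ}, P ∈ CsetB r → a + n ≤ r →
    ∀ {S : Finset ℕ}, S ⊆ Finset.Icc (a + 1) (a + n) → (∀ k ∈ S, IkpB r k P) →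
      (∀ k, ¬(k ∈ S ∧ k + 1 ∈ S)) → ∃ Q, Q ∈ CsetB r ∧ lpathB r n a S Q P
  | 0, a, P, hP, har, S, hsub, _, _ => by
    have : S = ∅ := by
      rw [← Finset.subset_empty]
      intro x hx
      have := hsub hx
      simp only [Finset.mem_Icc] at this
      exact absurd this (by omega)
    exact ⟨P, hP, this, rfl⟩
  | n + 1, a, P, hP, har, S, hsub, hval, hadj => by
    by_cases ha : a + 1 ∈ S
    · have hk2 : a + 1 ≤ r := by omega
      have hkp : IkpB r (a + 1) P := hval (a + 1) ha
      have ha2 : a + 2 ∉ S := fun hc => hadj (a + 1) ⟨ha, hc⟩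
      have hsub' : S.erase (a + 1) ⊆ Finset.Icc (a + 2) (a + 1 + n) := by
        intro x hx
        rw [Finset.mem_erase] at hx
        have := hsub hx.2
        simp only [Finset.mem_Icc] at this ⊢
        omega
      have hval' : ∀ k ∈ S.erase (a + 1), IkpB r k P := by
        intro k hk
        exact hval k (Finset.mem_erase.1 hk).2
      have hadj' : ∀ k, ¬(k ∈ S.erase (a + 1) ∧ k + 1 ∈ S.erase (a + 1)) := by
        intro k hc
        exact hadj k ⟨(Finset.mem_erase.1 hc.1).2, (Finset.mem_erase.1 hc.2).2⟩
      obtain ⟨Q', hQ', hlp⟩ := lpath_exists hP (by omega : (a + 1) + n ≤ r) hsub' hval' hadj'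
      -- `Q'` agrees with `P` on positions `a+1`, `a+2`
      have hsubQ := lpath_subset hlp
      have hflip := lpath_flip hlp hQ' (by omega)
      have hnotmem : ∀ x, x ≤ a + 1 → x ∉ S.erase (a + 1) := by
        intro x hx hc
        have := hsubQ hc
        simp only [Finset.mem_Icc] at this
        omega
      have e1 : (a + 1) ∈ Q' ↔ (a + 1) ∈ P := by
        have := hflip (a + 1) (by omega) hk2
        have n1 : (a + 1) ∉ S.erase (a + 1) := hnotmem _ (by omega)
        have n2 : (a + 1 - 1) ∉ S.erase (a + 1) := hnotmem _ (by omega)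
        tauto
      have hkpQ' : IkpB r (a + 1) Q' := by
        by_cases hr : a + 1 = r
        · rw [hr] at e1 hkp ⊢
          rw [IkpB_self] at hkp ⊢
          exact e1.2 hkp
        · have hlt : a + 1 < r := by omega
          have e2 : (a + 2) ∈ Q' ↔ (a + 2) ∈ P := by
            have := hflip (a + 2) (by omega) (by omega)
            have n1 : (a + 2) ∉ S.erase (a + 1) := fun hc => ha2 (Finset.mem_erase.1 hc).2
            have n2 : (a + 2 - 1) ∉ S.erase (a + 1) := hnotmem _ (by omega)
            tauto
          have hfacts := ikp_facts hP (by omega) hk2 hkp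
          rw [IkpB_of_ne hr] at hkp ⊢
          refine ⟨e1.2 hkp.1, ?_⟩
          have hpair := csetB_pair hQ' (k := a + 2) (by omega) (by omega)
          have e3 : 2 * r + 2 - (a + 2) = 2 * r + 1 - (a + 1) := by omega
          rw [e3] at hpair
          rw [hpair]
          intro hc
          exact ((hfacts.2.1 hlt).2.1) (e2.1 hc)
      refine ⟨phiB r (a + 1) Q', phi_mem_csetB hQ' (by omega) hk2,
        Or.inr ⟨ha, ikm_phi Q' hk2, ?_⟩⟩
      rw [psi_phi hQ' (by omega) hk2 hkpQ']
      exact hlp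
    · have hsub' : S ⊆ Finset.Icc (a + 2) (a + 1 + n) := by
        intro x hx
        have := hsub hx
        simp only [Finset.mem_Icc] at this ⊢
        refine ⟨?_, by omega⟩
        rcases Nat.lt_or_ge x (a + 2) with h | h
        · exfalso
          have : x = a + 1 := by omega
          exact ha (this ▸ hx)
        · exact h
      obtain ⟨Q, hQ, hlp⟩ := lpath_exists hP (by omega : (a + 1) + n ≤ r) hsub' hval hadj
      exact ⟨Q, hQ, Or.inl ⟨ha, hlp⟩⟩

lemma upath_unique {r n a : ℕ} {S P Q1 Q2 : Finset ℕ}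
    (h1 : upathB r n a S P Q1) (h2 : upathB r n a S P Q2)
    (hP : P ∈ CsetB r) (hQ1 : Q1 ∈ CsetB r) (hQ2 : Q2 ∈ CsetB r) (har : a + n ≤ r) :
    Q1 = Q2 := by
  apply csetB_ext hQ1 hQ2
  intro j hj1 hj2
  have f1 := upath_flip h1 hP har j hj1 hj2
  have f2 := upath_flip h2 hP har j hj1 hj2
  tauto

lemma ul_endpoint_eq {r n a : ℕ} {S P Q1 Q2 : Finset ℕ}
    (h1 : upathB r n a S P Q1) (h2 : lpathB r n a S Q2 P)
    (hP : P ∈ CsetB r) (hQ1 : Q1 ∈ CsetB r) (hQ2 : Q2 ∈ CsetB r) (har : a + n ≤ r) :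
    Q1 = Q2 := by
  apply csetB_ext hQ1 hQ2
  intro j hj1 hj2
  have f1 := upath_flip h1 hP har j hj1 hj2
  have f2 := lpath_flip h2 hQ2 har j hj1 hj2
  tauto

lemma ST_eq {r n a : ℕ} {S T P Q : Finset ℕ}
    (h1 : upathB r n a S P Q) (h2 : lpathB r n a T Q P)
    (hP : P ∈ CsetB r) (hQ : Q ∈ CsetB r) (har : a + n ≤ r) : S = T := by
  have hSsub := upath_subset h1
  have hTsub := lpath_subset h2
  have key : ∀ j, (j ∈ S ↔ j ∈ T) := by
    intro j
    induction j with
    | zero =>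
      constructor
      · intro hc
        have := hSsub hc; simp only [Finset.mem_Icc] at this; omega
      · intro hc
        have := hTsub hc; simp only [Finset.mem_Icc] at this; omega
    | succ j ih =>
      by_cases hj : 1 ≤ j + 1 ∧ j + 1 ≤ r
      · have f1 := upath_flip h1 hP har (j + 1) hj.1 hj.2
        have f2 := lpath_flip h2 hQ har (j + 1) hj.1 hj.2
        have e : j + 1 - 1 = j := by omega
        rw [e] at f1 f2
        tauto
      · constructor
        · intro hc
          have := hSsub hc; simp only [Finset.mem_Icc] at this
          exact absurd this (by omega)
        · intro hc
          have := hTsub hc; simp only [Finset.mem_Icc] at this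
          exact absurd this (by omega)
  exact Finset.ext key

lemma ST_subset {r : ℕ} {S J Q : Finset ℕ}
    (h1 : upathB r r 0 S J Q) (h2 : lpathB r r 0 S Q J)
    (hJ : J ∈ CsetB r) (hQ : Q ∈ CsetB r) : S ⊆ RIpB r J := by
  intro k hk
  have hkIcc := upath_subset h1 hk
  simp only [Finset.mem_Icc] at hkIcc
  have hkJ : k ∈ J := lpath_mem h2 hQ (by omega) k hk
  have hv := upath_valid h1 hJ (by omega) k hk
  have hlt : k < r → k + 1 ∉ J := hv.2.2
  rw [RIpB, Finset.mem_filter]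
  refine ⟨by simp only [Finset.mem_Icc]; omega, ?_⟩
  by_cases hkr : k = r
  · rw [hkr, IkpB_self]
    rw [hkr] at hkJ
    exact hkJ
  · rw [IkpB_of_ne hkr]
    refine ⟨hkJ, ?_⟩
    have hpair := csetB_pair hJ (k := k + 1) (by omega) (by omega)
    have e : 2 * r + 2 - (k + 1) = 2 * r + 1 - k := by omega
    rw [e] at hpair
    exact hpair.2 (hlt (by omega))

lemma Rp_mem {r k : ℕ} {J : Finset ℕ} :
    k ∈ RIpB r J ↔ ((1 ≤ k ∧ k ≤ r) ∧ IkpB r k J) := by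
  rw [RIpB, Finset.mem_filter, Finset.mem_Icc]

lemma Rp_nonadj {r : ℕ} {J : Finset ℕ} (hJ : J ∈ CsetB r) :
    ∀ k, ¬(k ∈ RIpB r J ∧ k + 1 ∈ RIpB r J) := by
  rintro k ⟨h1, h2⟩
  rw [Rp_mem] at h1 h2
  have hklt : k < r := by omega
  obtain ⟨-, hp1⟩ := h1
  obtain ⟨-, hp2⟩ := h2
  rw [IkpB_of_ne (by omega)] at hp1
  have hpair := csetB_pair hJ (k := k + 1) (by omega) (by omega)
  have e : 2 * r + 2 - (k + 1) = 2 * r + 1 - k := by omega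
  rw [e] at hpair
  have hk1 : k + 1 ∉ J := hpair.1 hp1.2
  by_cases hr : k + 1 = r
  · rw [hr, IkpB_self] at hp2
    rw [hr] at hk1
    exact hk1 hp2
  · rw [IkpB_of_ne hr] at hp2
    exact hk1 hp2.1

lemma up_prod_entry (r : ℕ) (c : ℕ → ℂ) :
    ∀ (n a : ℕ), a + n ≤ r → ∀ (P Q : {I // I ∈ CsetB r}),
    (((List.range' a n).map fun m => EhatUpB r (m + 1) (c (m + 1))).prod) P Q
      = ∑ S ∈ (Finset.Icc (a + 1) (a + n)).powerset,
          if upathB r n a S P.1 Q.1 then ∏ k ∈ S, c k else 0 := by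
  intro n
  induction n with
  | zero =>
    intro a _ P Q
    rw [show Finset.Icc (a + 1) (a + 0) = ∅ from Finset.Icc_eq_empty (by omega)]
    rw [Finset.powerset_empty, Finset.sum_singleton]
    simp only [List.range'_zero, List.map_nil, List.prod_nil, Matrix.one_apply]
    have he : upathB r 0 a ∅ P.1 Q.1 ↔ P = Q := by
      show (∅ = ∅ ∧ P.1 = Q.1) ↔ P = Q
      rw [Subtype.ext_iff]
      tauto
    rw [if_congr he.symm rfl rfl, Finset.prod_empty]
  | succ n IH =>
    intro a har P Q
    rw [List.range'_succ, List.map_cons, List.prod_cons, Matrix.mul_apply]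
    have hk2 : a + 1 ≤ r := by omega
    -- compute the sum over P'
    have hsplit : ∀ P' : {I // I ∈ CsetB r},
        (EhatUpB r (a + 1) (c (a + 1))) P P'
          * (((List.range' (a + 1) n).map fun m => EhatUpB r (m + 1) (c (m + 1))).prod) P' Q
        = (if P = P' then (((List.range' (a + 1) n).map
              fun m => EhatUpB r (m + 1) (c (m + 1))).prod) P' Q else 0)
          + (if IkpB r (a + 1) P.1 ∧ P'.1 = phiB r (a + 1) P.1 then
              c (a + 1) * (((List.range' (a + 1) n).map
                fun m => EhatUpB r (m + 1) (c (m + 1))).prod) P' Q else 0) := by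
      intro P'
      show ((if P = P' then (1 : ℂ) else 0) + _) * _ = _
      rw [add_mul, ite_mul, ite_mul, one_mul, zero_mul]
    rw [Finset.sum_congr rfl fun P' _ => hsplit P', Finset.sum_add_distrib]
    rw [Finset.sum_ite_eq Finset.univ P
      (fun P' => (((List.range' (a + 1) n).map fun m => EhatUpB r (m + 1) (c (m + 1))).prod) P' Q),
      if_pos (Finset.mem_univ P)]
    rw [IH (a + 1) (by omega) P Q]
    -- second sum
    have hIcc : Finset.Icc (a + 1) (a + (n + 1)) = insert (a + 1) (Finset.Icc (a + 2) (a + (n + 1))) := by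
      rw [show Finset.Icc (a + 2) (a + (n + 1)) = Finset.Ioc (a + 1) (a + (n + 1)) from
        Finset.Icc_add_one_left_eq_Ioc _ _]
      rw [Finset.Ioc_insert_left (by omega)]
    have hnotmem : a + 1 ∉ Finset.Icc (a + 2) (a + (n + 1)) := by
      simp only [Finset.mem_Icc]; omega
    rw [hIcc, Finset.sum_powerset_insert hnotmem]
    have e2 : a + 1 + n = a + (n + 1) := by omega
    congr 1
    · -- first parts match
      apply Finset.sum_congr (by rw [e2])
      intro S hS
      rw [Finset.mem_powerset] at hS
      have haS : a + 1 ∉ S := fun hc => hnotmem (hS hc)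
      have : upathB r (n + 1) a S P.1 Q.1 ↔ upathB r n (a + 1) S P.1 Q.1 := by
        constructor
        · rintro (⟨_, h⟩ | ⟨h, _, _⟩)
          · exact h
          · exact absurd h haS
        · intro h
          exact Or.inl ⟨haS, h⟩
      rw [if_congr this rfl rfl]
    · -- second parts match
      by_cases hkp : IkpB r (a + 1) P.1
      · have hφ : phiB r (a + 1) P.1 ∈ CsetB r := phi_mem_csetB P.2 (by omega) hk2
        have hcond : ∀ P' : {I // I ∈ CsetB r},
            (IkpB r (a + 1) P.1 ∧ P'.1 = phiB r (a + 1) P.1) ↔ P' = ⟨phiB r (a + 1) P.1, hφ⟩ := by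
          intro P'
          rw [Subtype.ext_iff]
          tauto
        rw [Finset.sum_congr rfl fun P' _ => if_congr (hcond P') rfl rfl]
        rw [Finset.sum_ite_eq' Finset.univ (⟨phiB r (a + 1) P.1, hφ⟩ : {I // I ∈ CsetB r})
          (fun P' => c (a + 1) * (((List.range' (a + 1) n).map
            fun m => EhatUpB r (m + 1) (c (m + 1))).prod) P' Q),
          if_pos (Finset.mem_univ _)]
        rw [IH (a + 1) (by omega) ⟨phiB r (a + 1) P.1, hφ⟩ Q, Finset.mul_sum]
        apply Finset.sum_congr (by rw [e2])
        intro S hS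
        rw [Finset.mem_powerset] at hS
        have haS : a + 1 ∉ S := fun hc => hnotmem (hS hc)
        have hcond2 : upathB r (n + 1) a (insert (a + 1) S) P.1 Q.1
            ↔ upathB r n (a + 1) S (phiB r (a + 1) P.1) Q.1 := by
          constructor
          · rintro (⟨h, _⟩ | ⟨_, _, h⟩)
            · exact absurd (Finset.mem_insert_self _ _) h
            · rw [Finset.erase_insert haS] at h
              exact h
          · intro h
            refine Or.inr ⟨Finset.mem_insert_self _ _, hkp, ?_⟩
            rw [Finset.erase_insert haS]
            exact h
        rw [mul_ite, mul_zero, if_congr hcond2.symm rfl rfl,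
          Finset.prod_insert haS, mul_comm (c (a + 1)) _]
      · have hz1 : ∀ P' : {I // I ∈ CsetB r},
            (if IkpB r (a + 1) P.1 ∧ P'.1 = phiB r (a + 1) P.1 then
              c (a + 1) * (((List.range' (a + 1) n).map
                fun m => EhatUpB r (m + 1) (c (m + 1))).prod) P' Q else 0) = 0 := by
          intro P'
          rw [if_neg (fun hc => hkp hc.1)]
        rw [Finset.sum_congr rfl fun P' _ => hz1 P', Finset.sum_const_zero]
        symm
        apply Finset.sum_eq_zero
        intro S hS
        apply if_neg
        rintro (⟨h, _⟩ | ⟨_, h, _⟩)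
        · exact h (Finset.mem_insert_self _ _)
        · exact hkp h

lemma low_prod_entry (r : ℕ) :
    ∀ (n a : ℕ), a + n ≤ r → ∀ (P Q : {I // I ∈ CsetB r}),
    (((List.range' a n).map fun m => EhatLowB r (m + 1) 1).prod) P Q
      = ∑ S ∈ (Finset.Icc (a + 1) (a + n)).powerset,
          if lpathB r n a S P.1 Q.1 then (1 : ℂ) else 0 := by
  intro n
  induction n with
  | zero =>
    intro a _ P Q
    rw [show Finset.Icc (a + 1) (a + 0) = ∅ from Finset.Icc_eq_empty (by omega)]
    rw [Finset.powerset_empty, Finset.sum_singleton]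
    simp only [List.range'_zero, List.map_nil, List.prod_nil, Matrix.one_apply]
    have he : lpathB r 0 a ∅ P.1 Q.1 ↔ P = Q := by
      show (∅ = ∅ ∧ P.1 = Q.1) ↔ P = Q
      rw [Subtype.ext_iff]
      tauto
    rw [if_congr he.symm rfl rfl]
  | succ n IH =>
    intro a har P Q
    rw [List.range'_succ, List.map_cons, List.prod_cons, Matrix.mul_apply]
    have hk2 : a + 1 ≤ r := by omega
    have hsplit : ∀ P' : {I // I ∈ CsetB r},
        (EhatLowB r (a + 1) 1) P P'
          * (((List.range' (a + 1) n).map fun m => EhatLowB r (m + 1) 1).prod) P' Q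
        = (if P = P' then (((List.range' (a + 1) n).map
              fun m => EhatLowB r (m + 1) 1).prod) P' Q else 0)
          + (if IkpB r (a + 1) P'.1 ∧ P.1 = phiB r (a + 1) P'.1 then
              (((List.range' (a + 1) n).map
                fun m => EhatLowB r (m + 1) 1).prod) P' Q else 0) := by
      intro P'
      show ((if P = P' then (1 : ℂ) else 0) + _) * _ = _
      rw [add_mul, ite_mul, ite_mul, one_mul, zero_mul]
    rw [Finset.sum_congr rfl fun P' _ => hsplit P', Finset.sum_add_distrib]
    rw [Finset.sum_ite_eq Finset.univ P
      (fun P' => (((List.range' (a + 1) n).map fun m => EhatLowB r (m + 1) 1).prod) P' Q),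
      if_pos (Finset.mem_univ P)]
    rw [IH (a + 1) (by omega) P Q]
    have hIcc : Finset.Icc (a + 1) (a + (n + 1)) = insert (a + 1) (Finset.Icc (a + 2) (a + (n + 1))) := by
      rw [show Finset.Icc (a + 2) (a + (n + 1)) = Finset.Ioc (a + 1) (a + (n + 1)) from
        Finset.Icc_add_one_left_eq_Ioc _ _]
      rw [Finset.Ioc_insert_left (by omega)]
    have hnotmem : a + 1 ∉ Finset.Icc (a + 2) (a + (n + 1)) := by
      simp only [Finset.mem_Icc]; omega
    rw [hIcc, Finset.sum_powerset_insert hnotmem]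
    have e2 : a + 1 + n = a + (n + 1) := by omega
    congr 1
    · apply Finset.sum_congr (by rw [e2])
      intro S hS
      rw [Finset.mem_powerset] at hS
      have haS : a + 1 ∉ S := fun hc => hnotmem (hS hc)
      have : lpathB r (n + 1) a S P.1 Q.1 ↔ lpathB r n (a + 1) S P.1 Q.1 := by
        constructor
        · rintro (⟨_, h⟩ | ⟨h, _, _⟩)
          · exact h
          · exact absurd h haS
        · intro h
          exact Or.inl ⟨haS, h⟩
      rw [if_congr this rfl rfl]
    · by_cases hkm : IkmB r (a + 1) P.1
      · have hψ : psiB r (a + 1) P.1 ∈ CsetB r := psi_mem_csetB P.2 (by omega) hk2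
        have hcond : ∀ P' : {I // I ∈ CsetB r},
            (IkpB r (a + 1) P'.1 ∧ P.1 = phiB r (a + 1) P'.1)
              ↔ P' = ⟨psiB r (a + 1) P.1, hψ⟩ := by
          intro P'
          rw [Subtype.ext_iff]
          constructor
          · rintro ⟨hkp', heq⟩
            have := psi_phi P'.2 (by omega) hk2 hkp'
            rw [← this, ← heq]
          · intro h
            rw [h]
            refine ⟨ikp_psi P.1 hk2, (phi_psi P.2 (by omega) hk2 hkm).symm⟩
        rw [Finset.sum_congr rfl fun P' _ => if_congr (hcond P') rfl rfl]
        rw [Finset.sum_ite_eq' Finset.univ (⟨psiB r (a + 1) P.1, hψ⟩ : {I // I ∈ CsetB r})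
          (fun P' => (((List.range' (a + 1) n).map
            fun m => EhatLowB r (m + 1) 1).prod) P' Q),
          if_pos (Finset.mem_univ _)]
        rw [IH (a + 1) (by omega) ⟨psiB r (a + 1) P.1, hψ⟩ Q]
        apply Finset.sum_congr (by rw [e2])
        intro S hS
        rw [Finset.mem_powerset] at hS
        have haS : a + 1 ∉ S := fun hc => hnotmem (hS hc)
        have hcond2 : lpathB r (n + 1) a (insert (a + 1) S) P.1 Q.1
            ↔ lpathB r n (a + 1) S (psiB r (a + 1) P.1) Q.1 := by
          constructor
          · rintro (⟨h, _⟩ | ⟨_, _, h⟩)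
            · exact absurd (Finset.mem_insert_self _ _) h
            · rw [Finset.erase_insert haS] at h
              exact h
          · intro h
            refine Or.inr ⟨Finset.mem_insert_self _ _, hkm, ?_⟩
            rw [Finset.erase_insert haS]
            exact h
        rw [if_congr hcond2.symm rfl rfl]
      · have hz1 : ∀ P' : {I // I ∈ CsetB r},
            (if IkpB r (a + 1) P'.1 ∧ P.1 = phiB r (a + 1) P'.1 then
              (((List.range' (a + 1) n).map
                fun m => EhatLowB r (m + 1) 1).prod) P' Q else 0) = 0 := by
          intro P'
          apply if_neg
          rintro ⟨hkp', heq⟩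
          apply hkm
          rw [heq]
          exact ikm_phi P'.1 hk2
        rw [Finset.sum_congr rfl fun P' _ => hz1 P', Finset.sum_const_zero]
        symm
        apply Finset.sum_eq_zero
        intro S hS
        apply if_neg
        rintro (⟨h, _⟩ | ⟨_, h, _⟩)
        · exact h (Finset.mem_insert_self _ _)
        · exact hkm h

lemma ite_mul_ite' {A B : Prop} (x : ℂ) :
    (if A then x else 0) * (if B then (1 : ℂ) else 0) = if A ∧ B then x else 0 := by
  by_cases hA : A <;> by_cases hB : B <;> simp [hA, hB]

lemma key_diag (r : ℕ) (c : ℕ → ℂ) (J : {I // I ∈ CsetB r}) :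
    (∑ J' : {I // I ∈ CsetB r},
      (∑ S ∈ (Finset.Icc 1 r).powerset, if upathB r r 0 S J.1 J'.1 then ∏ k ∈ S, c k else 0) *
      (∑ T ∈ (Finset.Icc 1 r).powerset, if lpathB r r 0 T J'.1 J.1 then (1 : ℂ) else 0))
    = ∏ k ∈ RIpB r J.1, (1 + c k) := by
  have har : 0 + r ≤ r := by omega
  have hIcc : Finset.Icc (0 + 1) (0 + r) = Finset.Icc 1 r := by norm_num
  have step1 : ∀ J' : {I // I ∈ CsetB r},
      (∑ S ∈ (Finset.Icc 1 r).powerset, if upathB r r 0 S J.1 J'.1 then ∏ k ∈ S, c k else 0) *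
      (∑ T ∈ (Finset.Icc 1 r).powerset, if lpathB r r 0 T J'.1 J.1 then (1 : ℂ) else 0)
      = ∑ S ∈ (Finset.Icc 1 r).powerset, ∑ T ∈ (Finset.Icc 1 r).powerset,
          if (upathB r r 0 S J.1 J'.1 ∧ lpathB r r 0 T J'.1 J.1) then ∏ k ∈ S, c k else 0 := by
    intro J'
    rw [Finset.sum_mul_sum]
    exact Finset.sum_congr rfl fun S _ => Finset.sum_congr rfl fun T _ => ite_mul_ite' _
  rw [Finset.sum_congr rfl fun J' _ => step1 J']
  rw [Finset.sum_comm]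
  have inner : ∀ S ∈ (Finset.Icc 1 r).powerset,
      (∑ J' : {I // I ∈ CsetB r}, ∑ T ∈ (Finset.Icc 1 r).powerset,
        if (upathB r r 0 S J.1 J'.1 ∧ lpathB r r 0 T J'.1 J.1) then ∏ k ∈ S, c k else 0)
      = if S ∈ (RIpB r J.1).powerset then ∏ k ∈ S, c k else 0 := by
    intro S hS
    rw [Finset.mem_powerset] at hS
    by_cases hSR : S ⊆ RIpB r J.1
    · have hval : ∀ k ∈ S, IkpB r k J.1 := fun k hk => (Rp_mem.1 (hSR hk)).2
      have hadj : ∀ k, ¬(k ∈ S ∧ k + 1 ∈ S) :=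
        fun k hc => Rp_nonadj J.2 k ⟨hSR hc.1, hSR hc.2⟩
      have hsub : S ⊆ Finset.Icc (0 + 1) (0 + r) := by rw [hIcc]; exact hS
      obtain ⟨Qu, hQu, hu⟩ := upath_exists J.2 har hsub hval hadj
      obtain ⟨Ql, hQl, hl⟩ := lpath_exists J.2 har hsub hval hadj
      have hQeq : Qu = Ql := ul_endpoint_eq hu hl J.2 hQu hQl har
      subst hQeq
      rw [if_pos (Finset.mem_powerset.2 hSR)]
      rw [Finset.sum_eq_single (⟨Qu, hQu⟩ : {I // I ∈ CsetB r})]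
      · rw [Finset.sum_eq_single S]
        · exact if_pos ⟨hu, hl⟩
        · intro T _ hTS
          apply if_neg
          rintro ⟨hu', hl'⟩
          exact hTS (ST_eq hu' hl' J.2 hQu har).symm
        · intro hc
          exact absurd (Finset.mem_powerset.2 hS) hc
      · intro J' _ hne
        apply Finset.sum_eq_zero
        intro T _
        apply if_neg
        rintro ⟨hu', hl'⟩
        exact hne (Subtype.ext (upath_unique hu' hu J.2 J'.2 hQu har))
      · intro hc
        exact absurd (Finset.mem_univ _) hc
    · rw [if_neg (fun hc => hSR (Finset.mem_powerset.1 hc))]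
      apply Finset.sum_eq_zero
      intro J' _
      apply Finset.sum_eq_zero
      intro T _
      apply if_neg
      rintro ⟨hu', hl'⟩
      have hTS : S = T := ST_eq hu' hl' J.2 J'.2 har
      subst hTS
      exact hSR (ST_subset hu' hl' J.2 J'.2)
  rw [Finset.sum_congr rfl inner]
  rw [Finset.sum_ite_mem]
  have hRsub : RIpB r J.1 ⊆ Finset.Icc 1 r := Finset.filter_subset _ _
  rw [Finset.inter_eq_right.mpr (Finset.powerset_mono.mpr hRsub)]
  have := Finset.prod_add c (fun _ => (1 : ℂ)) (RIpB r J.1)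
  simp only [Finset.prod_const_one, mul_one] at this
  rw [Finset.prod_congr rfl fun k _ => add_comm 1 (c k), this]

/-- Equation (5.66): the Coxeter–Toda Hamiltonian of the spin representation of
`SO_{2r+1}` equals `∑_{J∈𝒞} t_J · ∏_{k∈R_J^+} (1 + c_k)`. -/
theorem stmt_8 (r : ℕ) (hr : 2 ≤ r) (t c : ℕ → ℂ)
    (htne : ∀ i, 1 ≤ i → i ≤ r → t i ≠ 0)
    (hcne : ∀ i, 1 ≤ i → i ≤ r → c i ≠ 0) :
    Matrix.trace
      (((List.range r).map fun m => EhatLowB r (m + 1) 1).prod * DhatB r t *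
        ((List.range r).map fun m => EhatUpB r (m + 1) (c (m + 1))).prod)
      = ∑ J ∈ CsetB r, tIB r t J * ∏ k ∈ RIpB r J, (1 + c k) := by
  classical
  set L := ((List.range r).map fun m => EhatLowB r (m + 1) 1).prod with hL
  set U := ((List.range r).map fun m => EhatUpB r (m + 1) (c (m + 1))).prod with hU
  have har : 0 + r ≤ r := by omega
  rw [Matrix.trace_mul_comm (L * DhatB r t) U, ← Matrix.mul_assoc]
  rw [Matrix.trace]
  have hdiag : ∀ J : {I // I ∈ CsetB r},
      (U * L * DhatB r t).diag J = (U * L) J J * tIB r t J.1 := by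
    intro J
    show (U * L * DhatB r t) J J = _
    rw [show DhatB r t = Matrix.diagonal (fun P : {I // I ∈ CsetB r} => tIB r t P.1) from rfl]
    rw [Matrix.mul_diagonal]
  rw [Finset.sum_congr rfl fun J _ => hdiag J]
  have hentry : ∀ J : {I // I ∈ CsetB r}, (U * L) J J = ∏ k ∈ RIpB r J.1, (1 + c k) := by
    intro J
    rw [Matrix.mul_apply]
    have hterm : ∀ J' : {I // I ∈ CsetB r}, U J J' * L J' J
        = (∑ S ∈ (Finset.Icc 1 r).powerset, if upathB r r 0 S J.1 J'.1 then ∏ k ∈ S, c k else 0) *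
          (∑ T ∈ (Finset.Icc 1 r).powerset, if lpathB r r 0 T J'.1 J.1 then (1 : ℂ) else 0) := by
      intro J'
      rw [hU, hL, List.range_eq_range', up_prod_entry r c r 0 har J J',
        low_prod_entry r r 0 har J' J]
      norm_num
    rw [Finset.sum_congr rfl fun J' _ => hterm J']
    exact key_diag r c J
  rw [Finset.sum_congr rfl fun J _ => by rw [hentry J]]
  rw [← Finset.sum_coe_sort (CsetB r) (fun J => tIB r t J * ∏ k ∈ RIpB r J, (1 + c k))]
  exact Finset.sum_congr rfl fun J _ => mul_comm _ _
end
end
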